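/- arXiv:1711.05983 — 9 statements merged into one kernel-verified Lean document; each statement's English description precedes it below -/
import Mathlib

section
/- If f(x) is a polynomial with nonnegative real coefficients, all of whose roots are real, and f is symmetric (a_i = a_{n-i} for all i, where n = deg f), then f is gamma-positive: f(x) = \sum_{i=0}^{\lfloor n/2\rfloor} \gamma_i x^i (1+x)^{n-2i} with all \gamma_i \ge 0. -/
open Polynomial Finset

lemma reflect_root_inv {f : Polynomial ℝ} {n : ℕ} (hn : f.natDegree ≤ n)
    (hrefl : Polynomial.reflect n f = f) {r : ℝ} (hr : r ≠ 0) (h : f.eval r = 0) :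
    f.eval r⁻¹ = 0 := by
  have : Invertible r := invertibleOfNonzero hr
  have h2 := Polynomial.eval₂_reflect_eq_zero_iff (RingHom.id ℝ) r n f hn
  rw [hrefl] at h2
  have := h2.mpr (by exact h)
  rw [invOf_eq_right_inv (mul_inv_cancel₀ hr)] at this; exact this

lemma reflect_one_linear (a : ℝ) :
    Polynomial.reflect 1 (X - C a : Polynomial ℝ) = 1 - C a * X := by
  have h1 : (X - C a : Polynomial ℝ) = C 1 * X ^ 1 + C (-a) * X ^ 0 := by
    simp only [C_1, map_neg, pow_one, pow_zero, one_mul, mul_one]; ring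
  rw [h1, reflect_add, reflect_C_mul_X_pow, reflect_C_mul_X_pow,
    revAt_le (le_refl 1), revAt_zero]
  simp only [pow_zero, pow_one, mul_one, C_1, map_neg]
  ring


lemma gamma_key : ∀ n : ℕ, ∀ f : Polynomial ℝ, f.natDegree = n → f ≠ 0 →
    0 < f.leadingCoeff → Polynomial.reflect n f = f → f.roots.card = n →
    (∀ r ∈ f.roots, r < 0) →
    ∃ γ : ℕ → ℝ, (∀ i, 0 ≤ γ i) ∧
      f = ∑ i ∈ Finset.range (n / 2 + 1),
        Polynomial.C (γ i) * Polynomial.X ^ i * (1 + Polynomial.X) ^ (n - 2 * i) := by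
  intro n
  induction n using Nat.strong_induction_on with
  | _ n ih =>
  intro f hdeg hf0 hlc hrefl hcard hneg
  rcases Nat.eq_zero_or_pos n with hn0 | hn1
  · subst hn0
    refine ⟨fun _ => f.coeff 0, fun i => ?_, ?_⟩
    · have : f.leadingCoeff = f.coeff 0 := by rw [leadingCoeff, hdeg]
      linarith [this ▸ hlc]
    · simp only [Nat.zero_div, zero_add, Finset.sum_range_one, pow_zero, Nat.zero_sub,
        mul_one]
      exact (Polynomial.eq_C_of_natDegree_eq_zero hdeg)
  by_cases hm1 : f.IsRoot (-1)
  ·   obtain ⟨g, hfg⟩ := (dvd_iff_isRoot).mpr hm1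
      have hp0 : (X - C (-1) : Polynomial ℝ) ≠ 0 := X_sub_C_ne_zero _
      have hg0 : g ≠ 0 := by rintro rfl; rw [mul_zero] at hfg; exact hf0 hfg
      have hpd : (X - C (-1) : Polynomial ℝ).natDegree = 1 := natDegree_X_sub_C _
      have hdg : g.natDegree = n - 1 := by
        have h := natDegree_mul hp0 hg0
        rw [← hfg, hdeg, hpd] at h; omega
      have hlcg : 0 < g.leadingCoeff := by
        have h : f.leadingCoeff = g.leadingCoeff := by
          rw [hfg, leadingCoeff_mul, (monic_X_sub_C _).leadingCoeff, one_mul]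
        rwa [h] at hlc
      have hreflp : Polynomial.reflect 1 (X - C (-1) : Polynomial ℝ) = X - C (-1) := by
        have h1 : (X - C (-1) : Polynomial ℝ) = C 1 * X ^ 1 + C 1 * X ^ 0 := by
          simp only [C_1, map_neg, pow_one, pow_zero, one_mul, mul_one]; ring
        rw [h1, reflect_add, reflect_C_mul_X_pow, reflect_C_mul_X_pow]
        have e1 : revAt 1 1 = 0 := by rw [revAt_le (le_refl 1)]
        have e0 : revAt 1 0 = 1 := revAt_zero 1
        rw [e1, e0, add_comm]
      have hreflg : Polynomial.reflect (n - 1) g = g := by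
        have hn' : n = 1 + (n - 1) := by omega
        have h := Polynomial.reflect_mul (X - C (-1) : Polynomial ℝ) g
          (le_of_eq hpd) (le_of_eq hdg)
        rw [← hfg, ← hn', hrefl, hreflp] at h
        exact mul_left_cancel₀ hp0 (h.symm.trans hfg)
      have hrootsf : f.roots = (X - C (-1) : Polynomial ℝ).roots + g.roots := by
        rw [hfg, roots_mul (hfg ▸ hf0)]
      have hcardg : g.roots.card = n - 1 := by
        rw [hrootsf, roots_X_sub_C] at hcard
        simp only [Multiset.card_add, Multiset.card_singleton] at hcard; omega
      have hnegg : ∀ r ∈ g.roots, r < 0 := fun r hr =>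
        hneg r (by rw [hrootsf]; exact Multiset.mem_add.mpr (Or.inr hr))
      obtain ⟨γ, hγ, hg⟩ := ih (n - 1) (by omega) g hdg hg0 hlcg hreflg hcardg hnegg
      refine ⟨fun i => if 2 * i ≤ n - 1 then γ i else 0, fun i => ?_, ?_⟩
      · dsimp only; split
        · exact hγ i
        · exact le_refl 0
      have hpX : (X - C (-1) : Polynomial ℝ) = 1 + X := by
        rw [map_neg, C_1, sub_neg_eq_add, add_comm]
      have hsub : Finset.range ((n - 1) / 2 + 1) ⊆ Finset.range (n / 2 + 1) :=
        Finset.range_subset_range.mpr (by omega)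
      have hzero : ∀ x ∈ Finset.range (n / 2 + 1), x ∉ Finset.range ((n - 1) / 2 + 1) →
          C (if 2 * x ≤ n - 1 then γ x else 0) * X ^ x * (1 + X : Polynomial ℝ) ^ (n - 2 * x) = 0 := by
        intro x hx hnx
        simp only [Finset.mem_range] at hx hnx
        rw [if_neg (by omega), map_zero, zero_mul, zero_mul]
      simp only
      rw [← Finset.sum_subset hsub hzero, hfg, hpX, hg, Finset.mul_sum]
      refine Finset.sum_congr rfl (fun i hi => ?_)
      have h2i : 2 * i ≤ n - 1 := by
        have := Finset.mem_range.mp hi; omega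
      rw [if_pos h2i]
      have he : n - 2 * i = (n - 1 - 2 * i) + 1 := by omega
      rw [he, pow_succ]
      ring
  ·   -- n is even
      have heven : n % 2 = 0 := by
        by_contra hodd
        have hoddn : Odd n := Nat.odd_iff.mpr (by omega)
        have : Invertible (-1 : ℝ) := invertibleOfNonzero (by norm_num)
        have h := Polynomial.eval₂_reflect_mul_pow (RingHom.id ℝ) (-1 : ℝ) n f (le_of_eq hdeg)
        rw [hrefl] at h
        have hio : (⅟(-1 : ℝ)) = -1 := invOf_eq_right_inv (by norm_num)
        rw [hio, hoddn.neg_one_pow] at h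
        have he : Polynomial.eval (-1 : ℝ) f = eval₂ (RingHom.id ℝ) (-1 : ℝ) f := rfl
        apply hm1
        show f.eval (-1) = 0
        rw [he]; linarith
      -- pick a root r < 0, r ≠ -1
      have hex : ∃ r, r ∈ f.roots := by
        apply Multiset.card_pos_iff_exists_mem.mp; rw [hcard]; omega
      obtain ⟨r, hrmem⟩ := hex
      have hr : r < 0 := hneg r hrmem
      have hr0 : r ≠ 0 := ne_of_lt hr
      have hre : f.eval r = 0 := (mem_roots hf0).mp hrmem
      have hrne1 : r ≠ -1 := fun h => hm1 (h ▸ hre)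
      have hinv : f.eval r⁻¹ = 0 := reflect_root_inv (le_of_eq hdeg) hrefl hr0 hre
      have hrinv_ne : r ≠ r⁻¹ := by
        intro h
        have h2 : r * r = 1 := by nth_rewrite 2 [h]; exact mul_inv_cancel₀ hr0
        have h3 : (r + 1) * (r - 1) = 0 := by nlinarith
        rcases mul_eq_zero.mp h3 with h4 | h4
        · exact hrne1 (by linarith)
        · linarith
      have hrinv_neg : r⁻¹ < 0 := inv_lt_zero.mpr hr
      have hCrr : (C r : Polynomial ℝ) * C r⁻¹ = 1 := by
        rw [← C_mul, mul_inv_cancel₀ hr0, C_1]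
      -- the quadratic factor
      have hcop : IsCoprime (X - C r : Polynomial ℝ) (X - C r⁻¹) :=
        isCoprime_X_sub_C_of_isUnit_sub ((sub_ne_zero_of_ne hrinv_ne).isUnit)
      have hdvd : (X - C r) * (X - C r⁻¹) ∣ f :=
        hcop.mul_dvd (dvd_iff_isRoot.mpr hre) (dvd_iff_isRoot.mpr hinv)
      obtain ⟨g, hfg⟩ := hdvd
      have hq0 : ((X - C r) * (X - C r⁻¹) : Polynomial ℝ) ≠ 0 :=
        mul_ne_zero (X_sub_C_ne_zero r) (X_sub_C_ne_zero r⁻¹)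
      have hg0 : g ≠ 0 := by rintro rfl; rw [mul_zero] at hfg; exact hf0 hfg
      have hqd : ((X - C r) * (X - C r⁻¹) : Polynomial ℝ).natDegree = 2 := by
        rw [natDegree_mul (X_sub_C_ne_zero r) (X_sub_C_ne_zero r⁻¹),
          natDegree_X_sub_C, natDegree_X_sub_C]
      have hdg : g.natDegree = n - 2 := by
        have h := natDegree_mul hq0 hg0
        rw [← hfg, hdeg, hqd] at h; omega
      have hn2 : 2 ≤ n := by omega
      have hlcg : 0 < g.leadingCoeff := by
        have h : f.leadingCoeff = g.leadingCoeff := by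
          rw [hfg, leadingCoeff_mul, leadingCoeff_mul,
            (monic_X_sub_C r).leadingCoeff, (monic_X_sub_C r⁻¹).leadingCoeff, one_mul, one_mul]
        rwa [h] at hlc
      have hreflq : Polynomial.reflect 2 ((X - C r) * (X - C r⁻¹) : Polynomial ℝ)
          = (X - C r) * (X - C r⁻¹) := by
        have h := Polynomial.reflect_mul (X - C r : Polynomial ℝ) (X - C r⁻¹)
          (le_of_eq (natDegree_X_sub_C r)) (le_of_eq (natDegree_X_sub_C r⁻¹))
        rw [show (1 + 1 : ℕ) = 2 from rfl] at h
        rw [h, reflect_one_linear, reflect_one_linear]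
        linear_combination (X ^ 2 - 1 : Polynomial ℝ) * hCrr
      have hreflg : Polynomial.reflect (n - 2) g = g := by
        have hn' : n = 2 + (n - 2) := by omega
        have h := Polynomial.reflect_mul ((X - C r) * (X - C r⁻¹) : Polynomial ℝ) g
          (le_of_eq hqd) (le_of_eq hdg)
        rw [← hfg, ← hn', hrefl, hreflq] at h
        exact mul_left_cancel₀ hq0 (h.symm.trans hfg)
      have hrootsf : f.roots = ({r} + {r⁻¹} : Multiset ℝ) + g.roots := by
        rw [hfg, roots_mul (hfg ▸ hf0), roots_mul hq0, roots_X_sub_C, roots_X_sub_C]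
      have hcardg : g.roots.card = n - 2 := by
        rw [hrootsf] at hcard
        simp only [Multiset.card_add, Multiset.card_singleton] at hcard; omega
      have hnegg : ∀ x ∈ g.roots, x < 0 := fun x hx =>
        hneg x (by rw [hrootsf]; exact Multiset.mem_add.mpr (Or.inr hx))
      obtain ⟨γ, hγ, hgsum⟩ := ih (n - 2) (by omega) g hdg hg0 hlcg hreflg hcardg hnegg
      -- the gamma coefficient from the quadratic
      set s : ℝ := -(r + r⁻¹) - 2 with hs_def
      have hs : 0 ≤ s := by
        have h1 : r * r⁻¹ = 1 := mul_inv_cancel₀ hr0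
        rw [hs_def]; nlinarith [sq_nonneg (r + 1)]
      have hq_expand : ((X - C r) * (X - C r⁻¹) : Polynomial ℝ)
          = (1 + X) ^ 2 + C s * X := by
        have hC : (C s : Polynomial ℝ) = -(C r + C r⁻¹) - 2 := by
          rw [hs_def, map_sub, map_neg, map_add, map_ofNat]
        rw [hC]
        linear_combination hCrr
      refine ⟨fun j => (if 2 * j ≤ n - 2 then γ j else 0)
          + s * (if 1 ≤ j ∧ 2 * (j - 1) ≤ n - 2 then γ (j - 1) else 0), fun j => ?_, ?_⟩
      · dsimp only
        apply add_nonneg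
        · split
          · exact hγ j
          · exact le_refl 0
        · apply mul_nonneg hs
          split
          · exact hγ _
          · exact le_refl 0
      · dsimp only
        rw [hfg, hq_expand, hgsum, add_mul, Finset.mul_sum, Finset.mul_sum]
        have hRHS : ∑ j ∈ Finset.range (n / 2 + 1),
            C ((if 2 * j ≤ n - 2 then γ j else 0)
              + s * (if 1 ≤ j ∧ 2 * (j - 1) ≤ n - 2 then γ (j - 1) else 0)) * X ^ j
              * (1 + X : Polynomial ℝ) ^ (n - 2 * j)
            = (∑ j ∈ Finset.range (n / 2 + 1),
                C (if 2 * j ≤ n - 2 then γ j else 0) * X ^ j * (1 + X) ^ (n - 2 * j))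
            + ∑ j ∈ Finset.range (n / 2 + 1),
                C (s * (if 1 ≤ j ∧ 2 * (j - 1) ≤ n - 2 then γ (j - 1) else 0)) * X ^ j
                  * (1 + X) ^ (n - 2 * j) := by
          rw [← Finset.sum_add_distrib]
          refine Finset.sum_congr rfl fun j _ => ?_
          rw [map_add]; ring
        rw [hRHS]
        have hsub2 : Finset.range ((n - 2) / 2 + 1) ⊆ Finset.range (n / 2 + 1) :=
          Finset.range_subset_range.mpr (by omega)
        refine congrArg₂ HAdd.hAdd ?_ ?_
        · have hzero2 : ∀ x ∈ Finset.range (n / 2 + 1), x ∉ Finset.range ((n - 2) / 2 + 1) →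
              C (if 2 * x ≤ n - 2 then γ x else 0) * X ^ x
                * (1 + X : Polynomial ℝ) ^ (n - 2 * x) = 0 := by
            intro x hx hnx
            simp only [Finset.mem_range] at hx hnx
            rw [if_neg (by omega), map_zero, zero_mul, zero_mul]
          rw [← Finset.sum_subset hsub2 hzero2]
          refine Finset.sum_congr rfl fun i hi => ?_
          have h2i : 2 * i ≤ n - 2 := by have := Finset.mem_range.mp hi; omega
          rw [if_pos h2i]
          have he : n - 2 * i = (n - 2 - 2 * i) + 2 := by omega
          rw [he, pow_add]
          ring
        · have hb0 : C (s * (if 1 ≤ 0 ∧ 2 * (0 - 1) ≤ n - 2 then γ (0 - 1) else 0)) * X ^ 0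
              * (1 + X : Polynomial ℝ) ^ (n - 2 * 0) = 0 := by
            rw [if_neg (by omega), mul_zero, map_zero, zero_mul, zero_mul]
          have hrange : n / 2 = (n - 2) / 2 + 1 := by omega
          conv_rhs => rw [Finset.sum_range_succ']
          rw [hb0, add_zero, hrange]
          refine Finset.sum_congr rfl fun i hi => ?_
          have hi' : i ≤ (n - 2) / 2 := by have := Finset.mem_range.mp hi; omega
          have h2i : 2 * i ≤ n - 2 := by omega
          rw [if_pos (by constructor <;> omega : 1 ≤ i + 1 ∧ 2 * (i + 1 - 1) ≤ n - 2)]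
          have he : n - 2 * (i + 1) = n - 2 - 2 * i := by omega
          rw [he]
          simp only [Nat.add_sub_cancel]
          rw [map_mul]
          ring

/-- A symmetric, real-rooted polynomial with nonnegative coefficients
is gamma-positive. -/
theorem real_rooted_symmetric_implies_gamma_positive
    (f : Polynomial ℝ)
    (hpos : ∀ i, 0 ≤ f.coeff i)
    (hroots : ∀ z : ℂ, (f.map (algebraMap ℝ ℂ)).IsRoot z → z.im = 0)
    (hsym : ∀ i ≤ f.natDegree, f.coeff i = f.coeff (f.natDegree - i)) :
    ∃ γ : ℕ → ℝ, (∀ i, 0 ≤ γ i) ∧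
      f = ∑ i ∈ Finset.range (f.natDegree / 2 + 1),
        Polynomial.C (γ i) * Polynomial.X ^ i *
          (1 + Polynomial.X) ^ (f.natDegree - 2 * i) := by
  by_cases hf0 : f = 0
  · refine ⟨fun _ => 0, fun i => le_refl 0, ?_⟩
    subst hf0
    simp
  · have hlc : 0 < f.leadingCoeff := by
      have h := hpos f.natDegree
      rw [coeff_natDegree] at h
      exact lt_of_le_of_ne h (Ne.symm (leadingCoeff_ne_zero.mpr hf0))
    have hsplits : f.Splits := by
      apply Splits.of_splits_map (algebraMap ℝ ℂ) (IsAlgClosed.splits _)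
      intro a ha
      have hroot : (f.map (algebraMap ℝ ℂ)).IsRoot a := isRoot_of_mem_roots ha
      have him := hroots a hroot
      exact ⟨a.re, Complex.ext (by simp) (by simp [him])⟩
    have hcard : f.roots.card = f.natDegree := (splits_iff_card_roots).mp hsplits
    have hrefl : Polynomial.reflect f.natDegree f = f := by
      ext i
      rw [coeff_reflect]
      rcases le_or_gt i f.natDegree with h | h
      · rw [revAt_le h]; exact (hsym i h).symm
      · rw [revAt_eq_self_of_lt h]
    have hneg : ∀ r ∈ f.roots, r < 0 := by
      intro r hrmem
      have hre : f.eval r = 0 := (mem_roots hf0).mp hrmem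
      by_contra h
      push_neg at h
      have heval : 0 < f.eval r := by
        rw [eval_eq_sum_range]
        apply Finset.sum_pos'
        · intro i _; exact mul_nonneg (hpos i) (pow_nonneg h i)
        · refine ⟨0, Finset.mem_range.mpr (Nat.succ_pos _), ?_⟩
          simp only [pow_zero, mul_one]
          have h0 : f.coeff 0 = f.leadingCoeff := by
            rw [hsym 0 (Nat.zero_le _), Nat.sub_zero, coeff_natDegree]
          rw [h0]; exact hlc
      rw [hre] at heval; exact lt_irrefl 0 heval
    exact gamma_key f.natDegree f rfl hf0 hlc hrefl hcard hneg
end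

section
/- For every positive integer n, A_n(-1) = 0 if n is even, and A_n(-1) = (-1)^{(n-1)/2} E_n if n is odd, where E_n is the number of up-down permutations in S_n (permutations w with w(i) < w(i+1) exactly for odd i in [n-1]). -/
open Polynomial Finset

/-- The value `w(i)` of a permutation of `{0,…,n-1}` at position `i` (0-based),
padded by `n` outside the range. -/
def permVal {n : ℕ} (w : Equiv.Perm (Fin n)) (i : ℕ) : ℕ :=
  if h : i < n then (w ⟨i, h⟩ : ℕ) else n

/-- The descent set of a permutation, as a subset of `{0,…,n-2}` (0-based positions). -/
def desSet {n : ℕ} (w : Equiv.Perm (Fin n)) : Finset ℕ :=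
  (Finset.range (n - 1)).filter fun i => permVal w (i + 1) < permVal w i

/-- The number of descents of a permutation. -/
def des {n : ℕ} (w : Equiv.Perm (Fin n)) : ℕ := (desSet w).card

/-- The Eulerian polynomial `A_n(x) = ∑_{w ∈ S_n} x^{des(w)}`. -/
noncomputable def eulerian (n : ℕ) : Polynomial ℝ :=
  ∑ w : Equiv.Perm (Fin n), Polynomial.X ^ des w

/-- A permutation is up-down if its ascent positions (0-based) are exactly the even
positions, i.e. (1-based) `w(i) < w(i+1)` exactly for odd `i ∈ [n-1]`. -/
def IsUpDown {n : ℕ} (w : Equiv.Perm (Fin n)) : Prop :=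
  ∀ i ∈ Finset.range (n - 1), (permVal w i < permVal w (i + 1) ↔ Even i)

instance {n : ℕ} : DecidablePred (IsUpDown (n := n)) := fun _ => by
  unfold IsUpDown; infer_instance



namespace EulerNeg


/-- adjacent pairs -/
def pairs (l : List ℕ) : List (ℕ × ℕ) := l.zip l.tail

/-- junction pairs of a concatenation -/
def jnp (u v : List ℕ) : List (ℕ × ℕ) :=
  match u.getLast?, v.head? with
  | some a, some b => [(a, b)]
  | _, _ => []

@[simp] lemma pairs_nil : pairs [] = [] := rfl
@[simp] lemma pairs_single (a : ℕ) : pairs [a] = [] := rfl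
@[simp] lemma pairs_cons_cons (a b : ℕ) (t : List ℕ) :
    pairs (a :: b :: t) = (a, b) :: pairs (b :: t) := rfl

@[simp] lemma jnp_nil_left (v : List ℕ) : jnp [] v = [] := rfl
@[simp] lemma jnp_nil_right (u : List ℕ) : jnp u [] = [] := by
  unfold jnp
  rcases h : u.getLast? with _ | a <;> simp

lemma jnp_cons_head (u : List ℕ) (b : ℕ) (v : List ℕ) :
    jnp u (b :: v) = match u.getLast? with
      | some a => [(a, b)] | none => [] := by
  unfold jnp; rcases u.getLast? with _ | a <;> simp

lemma pairs_append (u v : List ℕ) :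
    pairs (u ++ v) = pairs u ++ jnp u v ++ pairs v := by
  induction u with
  | nil => simp
  | cons a u ih =>
    cases u with
    | nil =>
      cases v with
      | nil => simp
      | cons b t => simp [pairs, jnp]
    | cons a' u' =>
      have : (a :: a' :: u') ++ v = a :: ((a' :: u') ++ v) := rfl
      rw [this]
      have h2 : ∀ w, pairs (a :: a' :: w) = (a, a') :: pairs (a' :: w) := fun w => rfl
      rw [show (a' :: u') ++ v = a' :: (u' ++ v) from rfl] at ih ⊢
      rw [h2 (u' ++ v), ih, h2 u']
      have : jnp (a :: a' :: u') v = jnp (a' :: u') v := by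
        unfold jnp; rw [List.getLast?_cons_cons]
      rw [this]
      simp

def dcount (l : List ℕ) : ℕ := (pairs l).countP (fun p => decide (p.2 < p.1))

def jc (u v : List ℕ) : ℕ := (jnp u v).countP (fun p => decide (p.2 < p.1))

lemma dcount_append (u v : List ℕ) :
    dcount (u ++ v) = dcount u + jc u v + dcount v := by
  unfold dcount jc
  rw [pairs_append, List.countP_append, List.countP_append]


/-- helper: takeWhile over an append whose first part all satisfies p -/
lemma takeWhile_append_all {p : ℕ → Bool} {u : List ℕ} (v : List ℕ)
    (h : ∀ a ∈ u, p a = true) :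
    (u ++ v).takeWhile p = u ++ v.takeWhile p := by
  induction u with
  | nil => simp
  | cons a u ih =>
    simp only [List.cons_append, List.takeWhile_cons, h a (by simp), if_true,
      List.cons.injEq, true_and]
    simpa using ih (fun a ha => h a (by simp [ha]))

lemma dropWhile_append_all {p : ℕ → Bool} {u : List ℕ} (v : List ℕ)
    (h : ∀ a ∈ u, p a = true) :
    (u ++ v).dropWhile p = v.dropWhile p := by
  induction u with
  | nil => simp
  | cons a u ih =>
    simp only [List.cons_append, List.dropWhile_cons, h a (by simp)]
    exact ih (fun a ha => h a (by simp [ha]))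

lemma takeWhile_eq_nil_of_head {p : ℕ → Bool} {u : List ℕ}
    (h : ∀ a ∈ u.head?, p a = false) : u.takeWhile p = [] := by
  cases u with
  | nil => rfl
  | cons a t => simp only [List.head?_cons, Option.mem_some_iff] at h
                simp [List.takeWhile_cons, h a rfl]

lemma dropWhile_eq_self_of_head {p : ℕ → Bool} {u : List ℕ}
    (h : ∀ a ∈ u.head?, p a = false) : u.dropWhile p = u := by
  cases u with
  | nil => rfl
  | cons a t => simp only [List.head?_cons, Option.mem_some_iff] at h
                simp [List.dropWhile_cons, h a rfl]


lemma mem_jnp {p : ℕ × ℕ} {u v : List ℕ} :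
    p ∈ jnp u v ↔ ∃ a ∈ u.getLast?, ∃ b ∈ v.head?, p = (a, b) := by
  unfold jnp
  rcases hu : u.getLast? with _ | a <;> rcases hv : v.head? with _ | b <;> simp

lemma jnp_append_right {v : List ℕ} (u w : List ℕ) (h : v ≠ []) :
    jnp u (v ++ w) = jnp u v := by
  unfold jnp
  rw [List.head?_append_of_ne_nil _ h]

lemma jnp_append_left {v : List ℕ} (u w : List ℕ) (h : v ≠ []) :
    jnp (u ++ v) w = jnp v w := by
  unfold jnp
  rw [List.getLast?_append_of_ne_nil u h]

lemma fst_mem_of_mem_pairs {p : ℕ × ℕ} {l : List ℕ} (h : p ∈ pairs l) : p.1 ∈ l := by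
  rcases p with ⟨a, b⟩; exact (List.of_mem_zip h).1

lemma snd_mem_of_mem_pairs {p : ℕ × ℕ} {l : List ℕ} (h : p ∈ pairs l) : p.2 ∈ l := by
  rcases p with ⟨a, b⟩; exact List.tail_subset l (List.of_mem_zip h).2

def Lsm (y : ℕ) (l : List ℕ) : Prop := ∃ p ∈ pairs l, p.2 = y ∧ p.1 < y
def Rsm (y : ℕ) (l : List ℕ) : Prop := ∃ p ∈ pairs l, p.1 = y ∧ p.2 < y

instance (y : ℕ) (l : List ℕ) : Decidable (Lsm y l) := by unfold Lsm; infer_instance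
instance (y : ℕ) (l : List ℕ) : Decidable (Rsm y l) := by unfold Rsm; infer_instance

def Bad (y : ℕ) (l : List ℕ) : Prop := Xor' (Lsm y l) (Rsm y l)
instance (y : ℕ) (l : List ℕ) : Decidable (Bad y l) := by unfold Bad Xor'; infer_instance

lemma exists_mem_append {u v : List (ℕ × ℕ)} {P : ℕ × ℕ → Prop} :
    (∃ p ∈ u ++ v, P p) ↔ (∃ p ∈ u, P p) ∨ (∃ p ∈ v, P p) := by
  simp [List.mem_append, or_and_right, exists_or]

section Move

variable {x : ℕ} {A Q B : List ℕ}

lemma pairs_src (hQ : Q ≠ []) :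
    pairs (A ++ x :: (Q ++ B)) =
      pairs A ++ jnp A [x] ++ (jnp [x] Q ++ (pairs Q ++ (jnp Q B ++ pairs B))) := by
  rw [show A ++ x :: (Q ++ B) = A ++ ([x] ++ (Q ++ B)) from rfl, pairs_append,
    pairs_append, jnp_append_right _ _ (by simp), jnp_append_right _ _ hQ, pairs_append]
  simp

lemma pairs_tgt (hQ : Q ≠ []) :
    pairs (A ++ Q ++ x :: B) =
      pairs A ++ jnp A Q ++ (pairs Q ++ (jnp Q [x] ++ (jnp [x] B ++ pairs B))) := by
  rw [show A ++ Q ++ x :: B = A ++ (Q ++ ([x] ++ B)) by simp, pairs_append,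
    pairs_append, pairs_append, jnp_append_right _ _ hQ, jnp_append_right _ _ (by simp : [x] ≠ [])]
  simp

variable (hQx : ∀ a ∈ Q, a < x) (hA : ∀ a ∈ A.getLast?, x < a)
  (hB : ∀ b ∈ B.head?, x < b)

include hQx hA hB in
/-- status of values below `x` is unchanged by the move -/
lemma move_pres {y : ℕ} (hy : y < x) (hQne : Q ≠ []) :
    (Lsm y (A ++ x :: (Q ++ B)) ↔ Lsm y (A ++ Q ++ x :: B)) ∧
    (Rsm y (A ++ x :: (Q ++ B)) ↔ Rsm y (A ++ Q ++ x :: B)) := by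
  have hjAx : ∀ p ∈ jnp A [x], p.1 > x ∧ p.2 = x := by
    intro p hp; rcases mem_jnp.1 hp with ⟨a, ha, b, hb, rfl⟩
    simp only [List.head?_cons, Option.mem_some_iff] at hb
    exact ⟨hA a ha, hb.symm⟩
  have hjxQ : ∀ p ∈ jnp [x] Q, p.1 = x ∧ p.2 < x := by
    intro p hp; rcases mem_jnp.1 hp with ⟨a, ha, b, hb, rfl⟩
    simp only [List.getLast?_singleton, Option.mem_some_iff] at ha
    exact ⟨ha.symm, hQx b (List.mem_of_mem_head? hb)⟩
  have hjQB : ∀ p ∈ jnp Q B, p.1 < x ∧ p.2 > x := by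
    intro p hp; rcases mem_jnp.1 hp with ⟨a, ha, b, hb, rfl⟩
    exact ⟨hQx a (List.mem_of_mem_getLast? ha), hB b hb⟩
  have hjAQ : ∀ p ∈ jnp A Q, p.1 > x ∧ p.2 < x := by
    intro p hp; rcases mem_jnp.1 hp with ⟨a, ha, b, hb, rfl⟩
    exact ⟨hA a ha, hQx b (List.mem_of_mem_head? hb)⟩
  have hjQx : ∀ p ∈ jnp Q [x], p.1 < x ∧ p.2 = x := by
    intro p hp; rcases mem_jnp.1 hp with ⟨a, ha, b, hb, rfl⟩
    simp only [List.head?_cons, Option.mem_some_iff] at hb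
    exact ⟨hQx a (List.mem_of_mem_getLast? ha), hb.symm⟩
  have hjxB : ∀ p ∈ jnp [x] B, p.1 = x ∧ p.2 > x := by
    intro p hp; rcases mem_jnp.1 hp with ⟨a, ha, b, hb, rfl⟩
    simp only [List.getLast?_singleton, Option.mem_some_iff] at ha
    exact ⟨ha.symm, hB b hb⟩
  have e1 : ¬ ∃ p ∈ jnp A [x], p.2 = y ∧ p.1 < y := by
    rintro ⟨p, hp, h2, h1⟩; have := (hjAx p hp).2; omega
  have e2 : ¬ ∃ p ∈ jnp [x] Q, p.2 = y ∧ p.1 < y := by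
    rintro ⟨p, hp, h2, h1⟩; have := (hjxQ p hp).1; omega
  have e3 : ¬ ∃ p ∈ jnp Q B, p.2 = y ∧ p.1 < y := by
    rintro ⟨p, hp, h2, h1⟩; have := (hjQB p hp).2; omega
  have e4 : ¬ ∃ p ∈ jnp A Q, p.2 = y ∧ p.1 < y := by
    rintro ⟨p, hp, h2, h1⟩; have := (hjAQ p hp).1; omega
  have e5 : ¬ ∃ p ∈ jnp Q [x], p.2 = y ∧ p.1 < y := by
    rintro ⟨p, hp, h2, h1⟩; have := (hjQx p hp).2; omega
  have e6 : ¬ ∃ p ∈ jnp [x] B, p.2 = y ∧ p.1 < y := by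
    rintro ⟨p, hp, h2, h1⟩; have := (hjxB p hp).2; omega
  have f1 : ¬ ∃ p ∈ jnp A [x], p.1 = y ∧ p.2 < y := by
    rintro ⟨p, hp, h2, h1⟩; have := (hjAx p hp).1; omega
  have f2 : ¬ ∃ p ∈ jnp [x] Q, p.1 = y ∧ p.2 < y := by
    rintro ⟨p, hp, h2, h1⟩; have := (hjxQ p hp).1; omega
  have f3 : ¬ ∃ p ∈ jnp Q B, p.1 = y ∧ p.2 < y := by
    rintro ⟨p, hp, h2, h1⟩; have := (hjQB p hp).2; omega
  have f4 : ¬ ∃ p ∈ jnp A Q, p.1 = y ∧ p.2 < y := by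
    rintro ⟨p, hp, h2, h1⟩; have := (hjAQ p hp).1; omega
  have f5 : ¬ ∃ p ∈ jnp Q [x], p.1 = y ∧ p.2 < y := by
    rintro ⟨p, hp, h2, h1⟩; have := (hjQx p hp).2; omega
  have f6 : ¬ ∃ p ∈ jnp [x] B, p.1 = y ∧ p.2 < y := by
    rintro ⟨p, hp, h2, h1⟩; have := (hjxB p hp).1; omega
  constructor
  · unfold Lsm
    rw [pairs_src hQne, pairs_tgt hQne]
    simp only [exists_mem_append]
    constructor
    · rintro ((h | h) | h | h | h | h)
      · exact Or.inl (Or.inl h)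
      · exact absurd h e1
      · exact absurd h e2
      · exact Or.inr (Or.inl h)
      · exact absurd h e3
      · exact Or.inr (Or.inr (Or.inr (Or.inr h)))
    · rintro ((h | h) | h | h | h | h)
      · exact Or.inl (Or.inl h)
      · exact absurd h e4
      · exact Or.inr (Or.inr (Or.inl h))
      · exact absurd h e5
      · exact absurd h e6
      · exact Or.inr (Or.inr (Or.inr (Or.inr h)))
  · unfold Rsm
    rw [pairs_src hQne, pairs_tgt hQne]
    simp only [exists_mem_append]
    constructor
    · rintro ((h | h) | h | h | h | h)
      · exact Or.inl (Or.inl h)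
      · exact absurd h f1
      · exact absurd h f2
      · exact Or.inr (Or.inl h)
      · exact absurd h f3
      · exact Or.inr (Or.inr (Or.inr (Or.inr h)))
    · rintro ((h | h) | h | h | h | h)
      · exact Or.inl (Or.inl h)
      · exact absurd h f4
      · exact Or.inr (Or.inr (Or.inl h))
      · exact absurd h f5
      · exact absurd h f6
      · exact Or.inr (Or.inr (Or.inr (Or.inr h)))

include hQx hA hB in
lemma move_x_status (hQne : Q ≠ []) (hxA : x ∉ A) (hxB : x ∉ B) :
    (¬ Lsm x (A ++ x :: (Q ++ B))) ∧ Rsm x (A ++ x :: (Q ++ B)) ∧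
    Lsm x (A ++ Q ++ x :: B) ∧ ¬ Rsm x (A ++ Q ++ x :: B) := by
  obtain ⟨q, hq⟩ : ∃ q, Q.head? = some q := by
    cases Q with
    | nil => exact absurd rfl hQne
    | cons a t => exact ⟨a, rfl⟩
  obtain ⟨q', hq'⟩ : ∃ q', Q.getLast? = some q' := by
    rcases h : Q.getLast? with _ | a
    · exact absurd (List.getLast?_eq_none_iff.1 h) hQne
    · exact ⟨a, rfl⟩
  have hqx : q < x := hQx q (List.mem_of_mem_head? hq)
  have hq'x : q' < x := hQx q' (List.mem_of_mem_getLast? hq')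
  refine ⟨?_, ?_, ?_, ?_⟩
  · unfold Lsm
    rw [pairs_src hQne]
    simp only [exists_mem_append]
    rintro ((h | h) | h | h | h | h) <;> rcases h with ⟨p, hp, h2, h1⟩
    · exact hxA (h2 ▸ snd_mem_of_mem_pairs hp)
    · rcases mem_jnp.1 hp with ⟨a, ha, b, hb, rfl⟩
      have := hA a ha; omega
    · rcases mem_jnp.1 hp with ⟨a, ha, b, hb, rfl⟩
      have := hQx b (List.mem_of_mem_head? hb); simp at h2; omega
    · have := hQx p.2 (snd_mem_of_mem_pairs hp); omega
    · rcases mem_jnp.1 hp with ⟨a, ha, b, hb, rfl⟩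
      have := hB b hb; simp at h2; omega
    · exact hxB (h2 ▸ snd_mem_of_mem_pairs hp)
  · unfold Rsm
    rw [pairs_src hQne]
    simp only [exists_mem_append]
    refine Or.inr (Or.inl ⟨(x, q), mem_jnp.2 ⟨x, by simp, q, hq, rfl⟩, rfl, hqx⟩)
  · unfold Lsm
    rw [pairs_tgt hQne]
    simp only [exists_mem_append]
    exact Or.inr (Or.inr (Or.inl ⟨(q', x), mem_jnp.2 ⟨q', hq', x, by simp, rfl⟩, rfl, hq'x⟩))
  · unfold Rsm
    rw [pairs_tgt hQne]
    simp only [exists_mem_append]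
    rintro ((h | h) | h | h | h | h) <;> rcases h with ⟨p, hp, h2, h1⟩
    · exact hxA (h2 ▸ fst_mem_of_mem_pairs hp)
    · rcases mem_jnp.1 hp with ⟨a, ha, b, hb, rfl⟩
      have := hQx b (List.mem_of_mem_head? hb)
      have := hA a ha; simp at h2 h1; omega
    · have := hQx p.1 (fst_mem_of_mem_pairs hp); omega
    · rcases mem_jnp.1 hp with ⟨a, ha, b, hb, rfl⟩
      have := hQx a (List.mem_of_mem_getLast? ha); simp at h2; omega
    · rcases mem_jnp.1 hp with ⟨a, ha, b, hb, rfl⟩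
      have := hB b hb; simp at h2 h1; omega
    · exact hxB (h2 ▸ fst_mem_of_mem_pairs hp)

include hQx hA hB in
lemma move_dcount (hQne : Q ≠ []) :
    dcount (A ++ x :: (Q ++ B)) = dcount (A ++ Q ++ x :: B) + 1 := by
  obtain ⟨q, hq⟩ : ∃ q, Q.head? = some q := by
    cases Q with
    | nil => exact absurd rfl hQne
    | cons a t => exact ⟨a, rfl⟩
  have dsc : (fun p : ℕ × ℕ => decide (p.2 < p.1)) = fun p => decide (p.2 < p.1) := rfl
  unfold dcount
  rw [pairs_src hQne, pairs_tgt hQne]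
  simp only [List.countP_append]
  have c1 : (jnp A [x]).countP (fun p => decide (p.2 < p.1)) = (jnp A [x]).length := by
    apply List.countP_eq_length.2
    intro p hp
    rcases mem_jnp.1 hp with ⟨a, ha, b, hb, rfl⟩
    have := hA a ha; simp at hb ⊢; omega
  have c2 : (jnp [x] Q).countP (fun p => decide (p.2 < p.1)) = 1 := by
    have : jnp [x] Q = [(x, q)] := by
      unfold jnp; rw [hq]; simp
    rw [this]
    have := hQx q (List.mem_of_mem_head? hq)
    simp [this]
  have c3 : (jnp Q B).countP (fun p => decide (p.2 < p.1)) = 0 := by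
    apply List.countP_eq_zero.2
    intro p hp
    rcases mem_jnp.1 hp with ⟨a, ha, b, hb, rfl⟩
    have := hQx a (List.mem_of_mem_getLast? ha)
    have := hB b hb; simp; omega
  have c4 : (jnp A Q).countP (fun p => decide (p.2 < p.1)) = (jnp A Q).length := by
    apply List.countP_eq_length.2
    intro p hp
    rcases mem_jnp.1 hp with ⟨a, ha, b, hb, rfl⟩
    have := hA a ha
    have := hQx b (List.mem_of_mem_head? hb); simp; omega
  have c5 : (jnp Q [x]).countP (fun p => decide (p.2 < p.1)) = 0 := by
    apply List.countP_eq_zero.2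
    intro p hp
    rcases mem_jnp.1 hp with ⟨a, ha, b, hb, rfl⟩
    have := hQx a (List.mem_of_mem_getLast? ha); simp at hb ⊢; omega
  have c6 : (jnp [x] B).countP (fun p => decide (p.2 < p.1)) = 0 := by
    apply List.countP_eq_zero.2
    intro p hp
    rcases mem_jnp.1 hp with ⟨a, ha, b, hb, rfl⟩
    have := hB b hb; simp at ha ⊢; omega
  have clen : (jnp A [x]).length = (jnp A Q).length := by
    unfold jnp
    rw [hq]
    rcases A.getLast? with _ | a <;> simp
  rw [c1, c2, c3, c4, c5, c6, clen]
  omega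

lemma move_perm : (A ++ x :: (Q ++ B)).Perm (A ++ Q ++ x :: B) := by
  rw [show A ++ x :: (Q ++ B) = A ++ (([x] ++ Q) ++ B) from rfl,
    show A ++ Q ++ x :: B = A ++ ((Q ++ [x]) ++ B) by simp]
  exact (((List.perm_append_comm).append_right B).append_left A)

end Move


/- segment definitions -/
def segA (x : ℕ) (l : List ℕ) : List ℕ := l.takeWhile (fun a => decide (a ≠ x))
def segB (x : ℕ) (l : List ℕ) : List ℕ := (l.dropWhile (fun a => decide (a ≠ x))).tail
def segP (x : ℕ) (l : List ℕ) : List ℕ :=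
  ((segA x l).reverse.takeWhile (fun a => decide (a < x))).reverse
def segA1 (x : ℕ) (l : List ℕ) : List ℕ :=
  ((segA x l).reverse.dropWhile (fun a => decide (a < x))).reverse
def segQ (x : ℕ) (l : List ℕ) : List ℕ := (segB x l).takeWhile (fun a => decide (a < x))
def segB1 (x : ℕ) (l : List ℕ) : List ℕ := (segB x l).dropWhile (fun a => decide (a < x))

def hop (x : ℕ) (l : List ℕ) : List ℕ :=
  segA1 x l ++ segQ x l ++ x :: (segP x l ++ segB1 x l)

/-- the main computation rule for `hop` -/
lemma hop_eq {x : ℕ} {A P Q B : List ℕ}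
    (hP : ∀ a ∈ P, a < x) (hQ : ∀ a ∈ Q, a < x)
    (hA : ∀ a ∈ A.getLast?, x < a) (hB : ∀ b ∈ B.head?, x < b)
    (hxA : x ∉ A) (hxB : x ∉ B) :
    hop x (A ++ P ++ x :: (Q ++ B)) = A ++ Q ++ x :: (P ++ B) := by
  have hAP : ∀ a ∈ A ++ P, (decide (a ≠ x)) = true := by
    intro a ha
    rcases List.mem_append.1 ha with h | h
    · simp; rintro rfl; exact hxA h
    · simp; exact fun e => absurd e.symm (Nat.ne_of_gt (hP a h))
  have hsegA : segA x (A ++ P ++ x :: (Q ++ B)) = A ++ P := by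
    unfold segA
    rw [takeWhile_append_all _ hAP, List.takeWhile_cons]
    simp
  have hsegB : segB x (A ++ P ++ x :: (Q ++ B)) = Q ++ B := by
    unfold segB
    rw [dropWhile_append_all _ hAP, List.dropWhile_cons]
    simp
  have hArev : ∀ a ∈ A.reverse.head?, (decide (a < x)) = false := by
    intro a ha
    rw [List.head?_reverse] at ha
    simp [Nat.not_lt_of_gt (hA a ha)]
  have hsegP : segP x (A ++ P ++ x :: (Q ++ B)) = P := by
    unfold segP
    rw [hsegA, List.reverse_append,
      takeWhile_append_all _ (by intro a ha; simp at ha ⊢; exact hP a ha),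
      takeWhile_eq_nil_of_head hArev]
    simp
  have hsegA1 : segA1 x (A ++ P ++ x :: (Q ++ B)) = A := by
    unfold segA1
    rw [hsegA, List.reverse_append,
      dropWhile_append_all _ (by intro a ha; simp at ha ⊢; exact hP a ha),
      dropWhile_eq_self_of_head hArev]
    simp
  have hBhead : ∀ b ∈ B.head?, (decide (b < x)) = false := by
    intro b hb; simp [Nat.not_lt_of_gt (hB b hb)]
  have hsegQ : segQ x (A ++ P ++ x :: (Q ++ B)) = Q := by
    unfold segQ
    rw [hsegB, takeWhile_append_all _ (by intro a ha; simp; exact hQ a ha),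
      takeWhile_eq_nil_of_head hBhead]
    simp
  have hsegB1 : segB1 x (A ++ P ++ x :: (Q ++ B)) = B := by
    unfold segB1
    rw [hsegB, dropWhile_append_all _ (by intro a ha; simp; exact hQ a ha),
      dropWhile_eq_self_of_head hBhead]
  unfold hop
  rw [hsegA1, hsegQ, hsegP, hsegB1]


/-- neighbour criterion for `Lsm`/`Rsm` at `x` -/
lemma lsm_rsm_split {x : ℕ} {u v : List ℕ} (hxu : x ∉ u) (hxv : x ∉ v) :
    (Lsm x (u ++ x :: v) ↔ ∃ a ∈ u.getLast?, a < x) ∧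
    (Rsm x (u ++ x :: v) ↔ ∃ b ∈ v.head?, b < x) := by
  have hdec : pairs (u ++ x :: v) = pairs u ++ jnp u [x] ++ (jnp [x] v ++ pairs v) := by
    rw [show u ++ x :: v = u ++ ([x] ++ v) from rfl, pairs_append, pairs_append,
      jnp_append_right _ _ (by simp : [x] ≠ [])]
    simp
  constructor
  · unfold Lsm
    rw [hdec]
    simp only [exists_mem_append]
    constructor
    · rintro ((h | h) | h | h)
      · rcases h with ⟨p, hp, h2, h1⟩
        exact absurd (h2 ▸ snd_mem_of_mem_pairs hp) hxu
      · rcases h with ⟨p, hp, h2, h1⟩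
        rcases mem_jnp.1 hp with ⟨a, ha, b, hb, rfl⟩
        simp at hb h2 h1
        exact ⟨a, ha, hb ▸ h2 ▸ h1⟩
      · rcases h with ⟨p, hp, h2, h1⟩
        rcases mem_jnp.1 hp with ⟨a, ha, b, hb, rfl⟩
        simp at ha h2 h1
        exact absurd (h2 ▸ List.mem_of_mem_head? hb) hxv
      · rcases h with ⟨p, hp, h2, h1⟩
        exact absurd (h2 ▸ snd_mem_of_mem_pairs hp) hxv
    · rintro ⟨a, ha, hax⟩
      exact Or.inl (Or.inr ⟨(a, x), mem_jnp.2 ⟨a, ha, x, by simp, rfl⟩, rfl, hax⟩)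
  · unfold Rsm
    rw [hdec]
    simp only [exists_mem_append]
    constructor
    · rintro ((h | h) | h | h)
      · rcases h with ⟨p, hp, h2, h1⟩
        exact absurd (h2 ▸ fst_mem_of_mem_pairs hp) hxu
      · rcases h with ⟨p, hp, h2, h1⟩
        rcases mem_jnp.1 hp with ⟨a, ha, b, hb, rfl⟩
        simp at hb h2 h1
        exact absurd (h2 ▸ List.mem_of_mem_getLast? ha) hxu
      · rcases h with ⟨p, hp, h2, h1⟩
        rcases mem_jnp.1 hp with ⟨a, ha, b, hb, rfl⟩
        simp at ha h2 h1
        exact ⟨b, hb, h2 ▸ h1⟩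
      · rcases h with ⟨p, hp, h2, h1⟩
        exact absurd (h2 ▸ fst_mem_of_mem_pairs hp) hxv
    · rintro ⟨b, hb, hbx⟩
      exact Or.inr (Or.inl ⟨(x, b), mem_jnp.2 ⟨x, by simp, b, hb, rfl⟩, rfl, hbx⟩)


lemma head?_dropWhile_not' {p : ℕ → Bool} {l : List ℕ} {a : ℕ}
    (h : a ∈ (l.dropWhile p).head?) : p a = false := by
  rcases hd : l.dropWhile p with _ | ⟨b, t⟩
  · rw [hd] at h; simp at h
  · rw [hd] at h; simp at h
    subst h
    have := List.head_dropWhile_not p (l := l) (by rw [hd]; simp)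
    simpa [hd] using this

lemma seg_decomp {x : ℕ} {l : List ℕ} (hx : x ∈ l) (nd : l.Nodup) :
    l = segA1 x l ++ segP x l ++ x :: (segQ x l ++ segB1 x l) ∧
    (∀ a ∈ segP x l, a < x) ∧ (∀ a ∈ segQ x l, a < x) ∧
    (∀ a ∈ (segA1 x l).getLast?, x < a) ∧ (∀ b ∈ (segB1 x l).head?, x < b) ∧
    x ∉ segA1 x l ∧ x ∉ segB1 x l := by
  set p : ℕ → Bool := fun a => decide (a ≠ x) with hp
  have hd : l.dropWhile p ≠ [] := by
    intro h
    have := List.takeWhile_append_dropWhile (p := p) (l := l)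
    rw [h, List.append_nil] at this
    have := List.mem_takeWhile_imp (p := p) (this.symm ▸ hx)
    simp [hp] at this
  have headx : (l.dropWhile p).head hd = x := by
    have := List.head_dropWhile_not p (l := l) hd
    simpa [hp] using this
  have split : l = segA x l ++ x :: segB x l := by
    conv_lhs => rw [← List.takeWhile_append_dropWhile (p := p) (l := l)]
    rw [← List.cons_head_tail hd, headx]
    rfl
  have hxA : x ∉ segA x l := by
    intro h
    have := List.mem_takeWhile_imp h
    simp [hp] at this
  have hxB : x ∉ segB x l := by
    have : (x :: segB x l).Nodup := ((split ▸ nd).of_append_right)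
    simp at this; exact this.1
  have hsegA : segA x l = segA1 x l ++ segP x l := by
    unfold segA1 segP
    rw [← List.reverse_append, List.takeWhile_append_dropWhile, List.reverse_reverse]
  have hsegB : segB x l = segQ x l ++ segB1 x l := by
    unfold segQ segB1
    rw [List.takeWhile_append_dropWhile]
  have hPsub : segP x l ⊆ segA x l := by
    rw [hsegA]; exact List.subset_append_right _ _
  have hA1sub : segA1 x l ⊆ segA x l := by
    rw [hsegA]; exact List.subset_append_left _ _
  have hQsub : segQ x l ⊆ segB x l := by
    rw [hsegB]; exact List.subset_append_left _ _
  have hB1sub : segB1 x l ⊆ segB x l := by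
    rw [hsegB]; exact List.subset_append_right _ _
  refine ⟨?_, ?_, ?_, ?_, ?_, fun h => hxA (hA1sub h), fun h => hxB (hB1sub h)⟩
  · conv_lhs => rw [split, hsegA, hsegB]
  · intro a ha
    have : a ∈ (segA x l).reverse.takeWhile (fun a => decide (a < x)) := by
      unfold segP at ha; exact List.mem_reverse.1 ha
    have := List.mem_takeWhile_imp this
    simpa using this
  · intro a ha
    have := List.mem_takeWhile_imp ha
    simpa using this
  · intro a ha
    unfold segA1 at ha
    rw [List.getLast?_reverse] at ha
    have h1 := head?_dropWhile_not' ha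
    have h2 : a ∈ segA x l := hA1sub (by
      unfold segA1
      rw [List.mem_reverse]
      exact List.mem_of_mem_head? ha)
    have h3 : a ≠ x := by
      have := List.mem_takeWhile_imp h2
      simpa [hp] using this
    simp at h1
    omega
  · intro b hb
    have h1 := head?_dropWhile_not' hb
    have h2 : b ∈ segB x l := hB1sub (List.mem_of_mem_head? hb)
    have h3 : b ≠ x := fun h => hxB (h ▸ h2)
    simp at h1
    omega

theorem hop_spec {x : ℕ} {l : List ℕ} (hx : x ∈ l) (nd : l.Nodup) (hbad : Bad x l) :
    (hop x l).Perm l ∧ Bad x (hop x l) ∧ hop x (hop x l) = l ∧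
    (∀ y, y < x → (Bad y (hop x l) ↔ Bad y l)) ∧
    (dcount l = dcount (hop x l) + 1 ∨ dcount (hop x l) = dcount l + 1) := by
  obtain ⟨ldec, hP, hQ, hA, hB, hxA, hxB⟩ := seg_decomp hx nd
  set A := segA1 x l
  set P := segP x l
  set Q := segQ x l
  set B := segB1 x l
  have hxP : x ∉ P := fun h => absurd (hP x h) (by omega)
  have hxQ : x ∉ Q := fun h => absurd (hQ x h) (by omega)
  have hlsm : Lsm x l ↔ P ≠ [] := by
    conv_lhs => rw [ldec, show A ++ P ++ x :: (Q ++ B) = (A ++ P) ++ x :: (Q ++ B) by simp]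
    rw [(lsm_rsm_split (by simp [hxA, hxP]) (by simp [hxQ, hxB])).1]
    rcases hPe : P with _ | ⟨a, t⟩
    · simp only [List.append_nil]
      constructor
      · rintro ⟨a, ha, h⟩; exact absurd (hA a ha) (by omega)
      · simp
    · rw [List.getLast?_append_of_ne_nil _ (by simp)]
      constructor
      · intro; simp
      · intro
        rcases h : (a :: t).getLast? with _ | b
        · simp at h
        · exact ⟨b, by simp, hP b (hPe ▸ List.mem_of_mem_getLast? h)⟩
  have hrsm : Rsm x l ↔ Q ≠ [] := by
    conv_lhs => rw [ldec, show A ++ P ++ x :: (Q ++ B) = (A ++ P) ++ x :: (Q ++ B) by simp]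
    rw [(lsm_rsm_split (by simp [hxA, hxP]) (by simp [hxQ, hxB])).2]
    rcases hQe : Q with _ | ⟨a, t⟩
    · simp only [List.nil_append]
      constructor
      · rintro ⟨b, hb, h⟩; exact absurd (hB b hb) (by omega)
      · simp
    · rw [List.head?_append_of_ne_nil _ (by simp)]
      constructor
      · intro; simp
      · intro
        exact ⟨a, by simp, hQ a (by simp [hQe])⟩
  rcases hbad with ⟨hl, hr⟩ | ⟨hr, hl⟩
  · -- P ≠ [], Q = []
    have hPne : P ≠ [] := hlsm.1 hl
    have hQe : Q = [] := by
      by_contra h; exact hr (hrsm.2 h)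
    have hsrc : l = A ++ P ++ x :: B := by rw [ldec, hQe]; simp
    have heq : hop x l = A ++ x :: (P ++ B) := by
      have ldec' : l = A ++ P ++ x :: ([] ++ B) := by rw [ldec, hQe]
      conv_lhs => rw [ldec']
      rw [hop_eq hP (by simp) hA hB hxA hxB]
      simp
    refine ⟨?_, ?_, ?_, ?_, ?_⟩
    · rw [heq]
      conv_rhs => rw [hsrc]
      exact move_perm
    · rw [heq]
      obtain ⟨h1, h2, _, _⟩ := move_x_status hP hA hB hPne hxA hxB
      exact Or.inr ⟨h2, h1⟩
    · rw [heq]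
      have h0 := hop_eq (P := ([] : List ℕ)) (Q := P) (A := A) (B := B) (x := x)
        (by simp) hP hA hB hxA hxB
      simp only [List.append_nil, List.nil_append] at h0
      rw [h0, hsrc]
    · intro y hy
      have h := move_pres hP hA hB hy hPne
      rw [heq]
      conv_rhs => rw [hsrc]
      unfold Bad
      rw [h.1, h.2]
    · right
      rw [heq, hsrc]
      exact move_dcount hP hA hB hPne
  · -- Q ≠ [], P = []
    have hQne : Q ≠ [] := hrsm.1 hr
    have hPe : P = [] := by
      by_contra h; exact hl (hlsm.2 h)
    have hsrc : l = A ++ x :: (Q ++ B) := by rw [ldec, hPe]; simp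
    have heq : hop x l = A ++ Q ++ x :: B := by
      have ldec' : l = A ++ [] ++ x :: (Q ++ B) := by rw [ldec, hPe]
      conv_lhs => rw [ldec']
      rw [hop_eq (by simp) hQ hA hB hxA hxB]
      simp
    refine ⟨?_, ?_, ?_, ?_, ?_⟩
    · rw [heq]
      conv_rhs => rw [hsrc]
      exact move_perm.symm
    · rw [heq]
      obtain ⟨_, _, h3, h4⟩ := move_x_status hQ hA hB hQne hxA hxB
      exact Or.inl ⟨h3, h4⟩
    · rw [heq]
      have h0 := hop_eq (P := Q) (Q := ([] : List ℕ)) (A := A) (B := B) (x := x)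
        hQ (by simp) hA hB hxA hxB
      simp only [List.append_nil, List.nil_append] at h0
      rw [h0, hsrc]
    · intro y hy
      have h := move_pres hQ hA hB hy hQne
      rw [heq]
      conv_rhs => rw [hsrc]
      unfold Bad
      rw [h.1, h.2]
    · left
      rw [heq, hsrc]
      exact move_dcount hQ hA hB hQne

lemma mem_pairs_iff {p : ℕ × ℕ} {l : List ℕ} :
    p ∈ pairs l ↔ ∃ j, j + 1 < l.length ∧ p = (l.getD j 0, l.getD (j+1) 0) := by
  unfold pairs
  rw [List.mem_iff_getElem]
  constructor
  · rintro ⟨k, hk, hp⟩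
    have hk' : k + 1 < l.length := by
      rw [List.length_zip, List.length_tail] at hk
      omega
    refine ⟨k, hk', ?_⟩
    rw [← hp, List.getElem_zip, List.getElem_tail,
      List.getD_eq_getElem _ _ (by omega), List.getD_eq_getElem _ _ hk']
  · rintro ⟨j, hj, hp⟩
    refine ⟨j, by rw [List.length_zip, List.length_tail]; omega, ?_⟩
    rw [List.getElem_zip, List.getElem_tail, hp,
      List.getD_eq_getElem _ _ (by omega), List.getD_eq_getElem _ _ hj]

lemma lsm_pos {l : List ℕ} (nd : l.Nodup) {i : ℕ} (hi : i < l.length) :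
    Lsm (l.getD i 0) l ↔ 0 < i ∧ l.getD (i-1) 0 < l.getD i 0 := by
  unfold Lsm
  constructor
  · rintro ⟨p, hp, h2, h1⟩
    rcases mem_pairs_iff.1 hp with ⟨j, hj, rfl⟩
    simp only at h2 h1
    have hji : j + 1 = i := by
      rw [List.getD_eq_getElem _ _ hj, List.getD_eq_getElem _ _ hi] at h2
      exact (nd.getElem_inj_iff).1 h2
    refine ⟨by omega, ?_⟩
    rw [show i - 1 = j by omega, ← hji]
    exact h2 ▸ h1
  · rintro ⟨h0, hlt⟩
    refine ⟨(l.getD (i-1) 0, l.getD i 0), mem_pairs_iff.2 ⟨i - 1, by omega, by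
      rw [show i - 1 + 1 = i by omega]⟩, rfl, hlt⟩

lemma rsm_pos {l : List ℕ} (nd : l.Nodup) {i : ℕ} (hi : i < l.length) :
    Rsm (l.getD i 0) l ↔ i + 1 < l.length ∧ l.getD (i+1) 0 < l.getD i 0 := by
  unfold Rsm
  constructor
  · rintro ⟨p, hp, h2, h1⟩
    rcases mem_pairs_iff.1 hp with ⟨j, hj, rfl⟩
    simp only at h2 h1
    have hji : j = i := by
      rw [List.getD_eq_getElem _ _ (show j < l.length by omega),
        List.getD_eq_getElem _ _ hi] at h2
      exact (nd.getElem_inj_iff).1 h2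
    subst hji
    exact ⟨hj, h1⟩
  · rintro ⟨h0, hlt⟩
    exact ⟨(l.getD i 0, l.getD (i+1) 0), mem_pairs_iff.2 ⟨i, h0, rfl⟩, rfl, hlt⟩

lemma ne_adj {l : List ℕ} (nd : l.Nodup) {i : ℕ} (hi : i + 1 < l.length) :
    l.getD i 0 ≠ l.getD (i+1) 0 := by
  rw [List.getD_eq_getElem _ _ (by omega), List.getD_eq_getElem _ _ hi]
  intro h
  have := (nd.getElem_inj_iff).1 h
  omega

lemma not_bad_iff {l : List ℕ} {y : ℕ} (h : ¬ Bad y l) : Lsm y l ↔ Rsm y l := by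
  unfold Bad Xor' Xor at h
  tauto

lemma allgood_pattern {l : List ℕ} (nd : l.Nodup) (h : ∀ y ∈ l, ¬ Bad y l) :
    ∀ i, i + 1 < l.length → (l.getD i 0 < l.getD (i+1) 0 ↔ Even i) := by
  intro i
  induction i with
  | zero =>
    intro hi
    have h0 := not_bad_iff (h (l.getD 0 0) (by
      rw [List.getD_eq_getElem _ _ (by omega)]; exact List.getElem_mem _))
    rw [lsm_pos nd (by omega), rsm_pos nd (by omega)] at h0
    have hne := ne_adj nd hi
    have hA : ¬ ((0:ℕ) < 0 ∧ l.getD (0-1) 0 < l.getD 0 0) := by omega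
    have hB : ¬ (0 + 1 < l.length ∧ l.getD (0+1) 0 < l.getD 0 0) :=
      fun hb => hA (h0.2 hb)
    simp only [Even.zero, iff_true]
    omega
  | succ i ih =>
    intro hi
    have hib := ih (by omega)
    have h0 := not_bad_iff (h (l.getD (i+1) 0) (by
      rw [List.getD_eq_getElem _ _ (by omega)]; exact List.getElem_mem _))
    rw [lsm_pos nd (by omega), rsm_pos nd (by omega)] at h0
    rw [show i + 1 - 1 = i from rfl] at h0
    have hne1 := ne_adj nd (show i + 1 < l.length by omega)
    have hne2 := ne_adj nd hi
    rw [Nat.even_add_one]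
    rw [Nat.even_iff] at hib ⊢
    omega

lemma allgood_last {l : List ℕ} (nd : l.Nodup) (h : ∀ y ∈ l, ¬ Bad y l)
    (h2 : 2 ≤ l.length) : ¬ Even l.length := by
  intro hev
  have hlast := not_bad_iff (h (l.getD (l.length - 1) 0) (by
    rw [List.getD_eq_getElem _ _ (by omega)]; exact List.getElem_mem _))
  rw [lsm_pos nd (by omega), rsm_pos nd (by omega)] at hlast
  rw [show l.length - 1 - 1 = l.length - 2 by omega] at hlast
  have hpat := allgood_pattern nd h (l.length - 2) (by omega)
  have hne := ne_adj nd (show l.length - 2 + 1 < l.length by omega)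
  rw [show l.length - 2 + 1 = l.length - 1 by omega] at hpat hne
  rw [Nat.even_iff] at hpat hev
  omega

lemma allgood_of_pattern {l : List ℕ} (nd : l.Nodup) (hodd : ¬ Even l.length)
    (h : ∀ i, i + 1 < l.length → (l.getD i 0 < l.getD (i+1) 0 ↔ Even i)) :
    ∀ y ∈ l, ¬ Bad y l := by
  intro y hy hb
  rcases List.mem_iff_getElem.1 hy with ⟨i, hi, rfl⟩
  have hyd : l[i] = l.getD i 0 := (List.getD_eq_getElem _ _ hi).symm
  rw [hyd] at hb
  have hLR : ¬ (Lsm (l.getD i 0) l ↔ Rsm (l.getD i 0) l) := by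
    rcases hb with ⟨h1, h2⟩ | ⟨h1, h2⟩ <;> tauto
  apply hLR
  rw [lsm_pos nd hi, rsm_pos nd hi]
  by_cases h0 : 0 < i
  · by_cases hl : i + 1 < l.length
    · have p1 := h (i-1) (by omega)
      have p2 := h i hl
      have hne1 := ne_adj nd (show i - 1 + 1 < l.length by omega)
      have hne2 := ne_adj nd hl
      rw [show i - 1 + 1 = i by omega] at p1 hne1
      rw [Nat.even_iff] at p1 p2
      constructor
      · rintro ⟨-, hlt⟩
        refine ⟨hl, ?_⟩
        have := p1.1 hlt
        by_contra hcon
        have : l.getD i 0 < l.getD (i+1) 0 := by omega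
        have := p2.1 this
        omega
      · rintro ⟨-, hlt⟩
        refine ⟨h0, ?_⟩
        have : ¬ (l.getD i 0 < l.getD (i+1) 0) := by omega
        have h3 : ¬ (i % 2 = 0) := fun hc => this (p2.2 hc)
        by_contra hcon
        have : ¬ (l.getD (i-1) 0 < l.getD i 0) := by omega
        have h4 : ¬ ((i-1) % 2 = 0) := fun hc => this (p1.2 hc)
        omega
    · -- i is the last position
      have hil : i = l.length - 1 := by omega
      have p1 := h (i-1) (by omega)
      rw [show i - 1 + 1 = i by omega] at p1
      rw [Nat.even_iff] at p1
      rw [Nat.even_iff] at hodd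
      constructor
      · rintro ⟨-, hlt⟩
        have := p1.1 hlt
        omega
      · rintro ⟨hc, -⟩
        omega
  · have hi0 : i = 0 := by omega
    subst hi0
    constructor
    · rintro ⟨hc, -⟩; omega
    · rintro ⟨hl, hlt⟩
      have p2 := h 0 hl
      have hne := ne_adj nd hl
      rw [Nat.even_iff] at p2
      have : l.getD 0 0 < l.getD 1 0 := p2.2 (by omega)
      omega


lemma dcount_eq_card (l : List ℕ) :
    dcount l =
      ((Finset.range (l.length - 1)).filter fun i => l.getD (i+1) 0 < l.getD i 0).card := by
  induction l with
  | nil => rfl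
  | cons a t ih =>
    cases t with
    | nil => rfl
    | cons b t' =>
      have hd : dcount (a :: b :: t') =
          dcount (b :: t') + (if b < a then 1 else 0) := by
        unfold dcount
        rw [pairs_cons_cons, List.countP_cons]
        simp
      rw [hd, ih]
      rw [Finset.card_filter, Finset.card_filter]
      have hlen : (a :: b :: t').length - 1 = ((b :: t').length - 1) + 1 := by simp
      rw [hlen, Finset.sum_range_succ']
      simp [List.getD_cons_succ, List.getD_cons_zero]

variable {n : ℕ}

def lst (w : Equiv.Perm (Fin n)) : List ℕ := List.ofFn fun i => (w i : ℕ)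

@[simp] lemma length_lst (w : Equiv.Perm (Fin n)) : (lst w).length = n := by simp [lst]

lemma nodup_lst (w : Equiv.Perm (Fin n)) : (lst w).Nodup :=
  List.nodup_ofFn.2 (fun i j h => w.injective (Fin.val_injective h))

lemma getD_lst (w : Equiv.Perm (Fin n)) {i : ℕ} (h : i < n) :
    (lst w).getD i 0 = (w ⟨i, h⟩ : ℕ) := by
  rw [List.getD_eq_getElem _ _ (by simp [h])]
  simp [lst]

lemma mem_lst {w : Equiv.Perm (Fin n)} {y : ℕ} : y ∈ lst w ↔ y < n := by
  constructor
  · intro h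
    rw [lst, List.mem_ofFn] at h
    rcases h with ⟨i, rfl⟩
    exact (w i).isLt
  · intro h
    rw [lst, List.mem_ofFn]
    exact ⟨w.symm ⟨y, h⟩, by simp⟩

lemma lst_injective : Function.Injective (lst (n := n)) := by
  intro w w' h
  ext i
  have h1 : (lst w).getD i 0 = (lst w').getD i 0 := by rw [h]
  rw [getD_lst w i.isLt, getD_lst w' i.isLt] at h1
  simpa using h1

lemma des_eq (w : Equiv.Perm (Fin n)) : des w = dcount (lst w) := by
  rw [dcount_eq_card]
  unfold des desSet
  rw [length_lst]
  apply Finset.card_bij (fun i _ => i) <;> intro i hi <;>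
    simp only [Finset.mem_filter, Finset.mem_range] at *
  · obtain ⟨h1, h2⟩ := hi
    refine ⟨h1, ?_⟩
    rw [getD_lst w (show i < n by omega), getD_lst w (show i + 1 < n by omega)]
    unfold permVal at h2
    rw [dif_pos (show i < n by omega), dif_pos (show i + 1 < n by omega)] at h2
    exact h2
  · exact fun _ _ h => h
  · refine ⟨i, ⟨hi.1, ?_⟩, rfl⟩
    obtain ⟨h1, h2⟩ := hi
    unfold permVal
    rw [dif_pos (show i < n by omega), dif_pos (show i + 1 < n by omega)]
    rw [getD_lst w (show i < n by omega), getD_lst w (show i + 1 < n by omega)] at h2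
    exact h2

noncomputable def mkPerm (l : List ℕ) (h1 : l.length = n) (h2 : ∀ y ∈ l, y < n)
    (h3 : l.Nodup) : Equiv.Perm (Fin n) :=
  Equiv.ofBijective
    (fun i => ⟨l.getD i 0, h2 _ (by
      rw [List.getD_eq_getElem _ _ (by omega)]
      exact List.getElem_mem _)⟩)
    (Finite.injective_iff_bijective.1 (by
      intro i j hij
      simp only [Fin.mk.injEq] at hij
      rw [List.getD_eq_getElem _ _ (show (i:ℕ) < l.length by omega),
        List.getD_eq_getElem _ _ (show (j:ℕ) < l.length by omega)] at hij
      exact Fin.ext ((h3.getElem_inj_iff).1 hij)))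

lemma lst_mkPerm (l : List ℕ) (h1 : l.length = n) (h2 : ∀ y ∈ l, y < n) (h3 : l.Nodup) :
    lst (mkPerm l h1 h2 h3) = l := by
  apply List.ext_getElem (by simp [h1])
  intro i hi hi'
  simp only [lst, List.getElem_ofFn, mkPerm, Equiv.ofBijective_apply]
  rw [List.getD_eq_getElem _ _ (by omega)]



lemma bad_mem {y : ℕ} {l : List ℕ} (h : Bad y l) : y ∈ l := by
  rcases h with ⟨⟨p, hp, h2, _⟩, -⟩ | ⟨⟨p, hp, h2, _⟩, -⟩
  · exact h2 ▸ snd_mem_of_mem_pairs hp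
  · exact h2 ▸ fst_mem_of_mem_pairs hp

variable {n : ℕ}

lemma hop_length {x : ℕ} {l : List ℕ} (hx : x ∈ l) (nd : l.Nodup) (hb : Bad x l) :
    (hop x l).length = l.length :=
  (hop_spec hx nd hb).1.length_eq

/-- the sign-reversing involution -/
noncomputable def phi (w : Equiv.Perm (Fin n)) : Equiv.Perm (Fin n) :=
  letI : Decidable (∃ y, Bad y (lst w)) := Classical.dec _
  if h : ∃ y, Bad y (lst w) then
    mkPerm (hop (Nat.find h) (lst w))
      (by
        rw [hop_length (bad_mem (Nat.find_spec h)) (nodup_lst w) (Nat.find_spec h)]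
        simp)
      (fun y hy => mem_lst.1
        ((hop_spec (bad_mem (Nat.find_spec h)) (nodup_lst w) (Nat.find_spec h)).1.subset hy))
      ((hop_spec (bad_mem (Nat.find_spec h)) (nodup_lst w) (Nat.find_spec h)).1.symm.nodup
        (nodup_lst w))
  else w

lemma phi_lst (w : Equiv.Perm (Fin n)) (h : ∃ y, Bad y (lst w)) :
    lst (phi w) = hop (Nat.find h) (lst w) := by
  unfold phi
  rw [dif_pos h]
  exact lst_mkPerm _ _ _ _

lemma phi_bad (w : Equiv.Perm (Fin n)) (h : ∃ y, Bad y (lst w)) :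
    ∃ y, Bad y (lst (phi w)) := by
  rw [phi_lst w h]
  exact ⟨Nat.find h,
    (hop_spec (bad_mem (Nat.find_spec h)) (nodup_lst w) (Nat.find_spec h)).2.1⟩

lemma phi_find (w : Equiv.Perm (Fin n)) (h : ∃ y, Bad y (lst w)) :
    Nat.find (phi_bad w h) = Nat.find h := by
  obtain ⟨hperm, hbad, hhop, hpres, hdc⟩ :=
    hop_spec (bad_mem (Nat.find_spec h)) (nodup_lst w) (Nat.find_spec h)
  rw [Nat.find_eq_iff]
  constructor
  · rw [phi_lst w h]; exact hbad
  · intro m hm hbm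
    rw [phi_lst w h] at hbm
    exact Nat.find_min h hm ((hpres m hm).1 hbm)

lemma phi_phi (w : Equiv.Perm (Fin n)) (h : ∃ y, Bad y (lst w)) :
    phi (phi w) = w := by
  obtain ⟨hperm, hbad, hhop, hpres, hdc⟩ :=
    hop_spec (bad_mem (Nat.find_spec h)) (nodup_lst w) (Nat.find_spec h)
  apply lst_injective
  rw [phi_lst (phi w) (phi_bad w h), phi_find w h, phi_lst w h]
  exact hhop

lemma phi_des (w : Equiv.Perm (Fin n)) (h : ∃ y, Bad y (lst w)) :
    des w = des (phi w) + 1 ∨ des (phi w) = des w + 1 := by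
  obtain ⟨hperm, hbad, hhop, hpres, hdc⟩ :=
    hop_spec (bad_mem (Nat.find_spec h)) (nodup_lst w) (Nat.find_spec h)
  rw [des_eq, des_eq, phi_lst w h]
  exact hdc

lemma card_odd_range (m : ℕ) :
    ((Finset.range m).filter (fun i => ¬ Even i)).card = m / 2 := by
  induction m with
  | zero => simp
  | succ m ih =>
    rw [Finset.range_add_one, Finset.filter_insert]
    by_cases h : Even m
    · rw [if_neg (by simpa using h), ih]
      rw [Nat.even_iff] at h
      omega
    · rw [if_pos h, Finset.card_insert_of_notMem (fun hc => by
        simp at hc), ih]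
      rw [Nat.even_iff] at h
      omega


end EulerNeg

open EulerNeg in
/-- `A_n(-1)` vanishes for even `n` and equals
`(-1)^{(n-1)/2}` times the number of up-down permutations for odd `n`. -/
theorem eulerian_eval_neg_one (n : ℕ) (hn : 1 ≤ n) :
    (Even n → (eulerian n).eval (-1) = 0) ∧
    (Odd n → (eulerian n).eval (-1) =
      (-1 : ℝ) ^ ((n - 1) / 2) *
        ((Finset.univ.filter fun w : Equiv.Perm (Fin n) => IsUpDown w).card : ℝ)) := by
  classical
  have heval : (eulerian n).eval (-1) = ∑ w : Equiv.Perm (Fin n), (-1 : ℝ) ^ des w := by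
    unfold eulerian
    rw [Polynomial.eval_finset_sum]
    simp
  set AGp : Equiv.Perm (Fin n) → Prop := fun w => ∃ y, Bad y (lst w) with hAGp
  have hzero : ∑ w ∈ Finset.univ.filter AGp, (-1:ℝ)^(des w) = 0 := by
    apply Finset.sum_involution (g := fun w _ => phi w)
    · intro w hw
      have h := (Finset.mem_filter.1 hw).2
      rcases phi_des w h with h1 | h1 <;> rw [h1, pow_succ] <;> ring
    · intro w hw _
      have h := (Finset.mem_filter.1 hw).2
      intro hc
      rcases phi_des w h with h1 | h1 <;> rw [hc] at h1 <;> omega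
    · intro w hw
      exact Finset.mem_filter.2 ⟨Finset.mem_univ _, phi_bad w (Finset.mem_filter.1 hw).2⟩
    · intro w hw
      exact phi_phi w (Finset.mem_filter.1 hw).2
  have hsplit : ∑ w : Equiv.Perm (Fin n), (-1 : ℝ) ^ des w =
      ∑ w ∈ Finset.univ.filter (fun w => ¬ AGp w), (-1:ℝ)^(des w) := by
    rw [← Finset.sum_filter_add_sum_filter_not Finset.univ AGp
      (fun w => (-1:ℝ)^(des w)), hzero, zero_add]
  constructor
  · intro hev
    have h2n : 2 ≤ n := by
      rcases hev with ⟨k, hk⟩; omega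
    have hempty : Finset.univ.filter (fun w => ¬ AGp w) = ∅ := by
      rw [Finset.filter_eq_empty_iff]
      intro w _
      rw [not_not, hAGp]
      by_contra hno
      have hall : ∀ y ∈ lst w, ¬ Bad y (lst w) := fun y _ hb => hno ⟨y, hb⟩
      have := allgood_last (nodup_lst w) hall (by rw [length_lst]; omega)
      rw [length_lst] at this
      exact this hev
    rw [heval, hsplit, hempty]
    simp
  · intro hodd
    have hAGiff : ∀ w : Equiv.Perm (Fin n), (¬ AGp w) ↔ IsUpDown w := by
      intro w
      constructor
      · intro hno
        have hall : ∀ y ∈ lst w, ¬ Bad y (lst w) := fun y _ hb => hno ⟨y, hb⟩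
        have hpat := allgood_pattern (nodup_lst w) hall
        intro i hi
        rw [Finset.mem_range] at hi
        have hi1 : i + 1 < n := by omega
        have hp := hpat i (by rw [length_lst]; omega)
        rw [getD_lst w (show i < n by omega), getD_lst w hi1] at hp
        unfold permVal
        rw [dif_pos (show i < n by omega), dif_pos hi1]
        exact hp
      · intro hud hex
        have hall : ∀ y ∈ lst w, ¬ Bad y (lst w) := by
          apply allgood_of_pattern (nodup_lst w)
          · rw [length_lst]
            exact (Nat.not_even_iff_odd.2 hodd)
          · intro i hi
            rw [length_lst] at hi
            have hp := hud i (Finset.mem_range.2 (by omega))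
            unfold permVal at hp
            rw [dif_pos (show i < n by omega), dif_pos (show i+1 < n by omega)] at hp
            rw [getD_lst w (show i < n by omega), getD_lst w (show i+1 < n by omega)]
            exact hp
        rcases hex with ⟨y, hb⟩
        exact hall y (bad_mem hb) hb
    have hdes : ∀ w : Equiv.Perm (Fin n), IsUpDown w → des w = (n-1)/2 := by
      intro w hud
      unfold des desSet
      have hc : ∀ i ∈ Finset.range (n-1),
          ((permVal w (i+1) < permVal w i) ↔ ¬ Even i) := by
        intro i hi
        rw [Finset.mem_range] at hi
        have h1 := hud i (Finset.mem_range.2 hi)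
        have hne : permVal w i ≠ permVal w (i+1) := by
          unfold permVal
          rw [dif_pos (show i < n by omega), dif_pos (show i+1 < n by omega)]
          intro hcon
          have := w.injective (Fin.val_injective hcon)
          have := congrArg Fin.val this
          simp at this
        constructor
        · intro hlt hev
          have := h1.2 hev
          omega
        · intro hnev
          have h2 : ¬ (permVal w i < permVal w (i+1)) := fun hcc => hnev (h1.1 hcc)
          omega
      rw [Finset.filter_congr hc, card_odd_range]
    rw [heval, hsplit]
    rw [Finset.filter_congr (fun w _ => hAGiff w)]
    have hsum2 : ∑ w ∈ Finset.univ.filter (fun w : Equiv.Perm (Fin n) => IsUpDown w),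
        (-1:ℝ)^(des w) = ∑ _w ∈ Finset.univ.filter
        (fun w : Equiv.Perm (Fin n) => IsUpDown w), (-1:ℝ)^((n-1)/2) :=
      Finset.sum_congr rfl (fun w hw => by rw [hdes w (Finset.mem_filter.1 hw).2])
    rw [hsum2, Finset.sum_const, nsmul_eq_mul, mul_comm]
end

section
/- The derangement polynomials satisfy the recurrence d_n(x) = \sum_{k=0}^{n-2} \binom{n}{k} d_k(x) (x + x^2 + \cdots + x^{n-1-k}) for all n \ge 2, where d_0(x) = 1 and d_1(x) = 0. -/
open Polynomial Finset

/-- The number of excedances of a permutation: positions `i` with `w(i) > i`. -/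
def exc {n : ℕ} (w : Equiv.Perm (Fin n)) : ℕ :=
  (Finset.univ.filter fun i : Fin n => (i : ℕ) < (w i : ℕ)).card

/-- The derangement polynomial `d_n(x) = ∑_{w ∈ D_n} x^{exc(w)}`. -/
noncomputable def derangePoly (n : ℕ) : Polynomial ℝ :=
  ∑ w ∈ Finset.univ.filter (fun w : Equiv.Perm (Fin n) => ∀ i, w i ≠ i),
    Polynomial.X ^ exc w

def wexc {n : ℕ} (w : Equiv.Perm (Fin n)) : ℕ :=
  (Finset.univ.filter fun i : Fin n => (i : ℕ) ≤ (w i : ℕ)).card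

noncomputable def Apoly (n : ℕ) : Polynomial ℝ :=
  ∑ w : Equiv.Perm (Fin n), Polynomial.X ^ exc w

noncomputable def Wpoly (n : ℕ) : Polynomial ℝ :=
  ∑ w : Equiv.Perm (Fin n), Polynomial.X ^ wexc w

/-- insertion decomposition -/
def insE (n : ℕ) : Equiv.Perm (Fin (n+1)) ≃ (Option (Fin n)) × Equiv.Perm (Fin n) :=
  (Equiv.permCongr finSuccEquivLast).trans Equiv.Perm.decomposeOption

lemma insE_symm_apply (n : ℕ) (i : Option (Fin n)) (e : Equiv.Perm (Fin n)) (x : Fin (n+1)) :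
    (insE n).symm (i, e) x
      = finSuccEquivLast.symm ((Equiv.swap none i) ((finSuccEquivLast x).map e)) := by
  simp [insE, Equiv.permCongr_symm, Equiv.permCongr_apply, Equiv.Perm.decomposeOption,
    Equiv.Perm.mul_apply]

lemma insE_none_castSucc {n : ℕ} (e : Equiv.Perm (Fin n)) (q : Fin n) :
    (insE n).symm (none, e) (Fin.castSucc q) = Fin.castSucc (e q) := by
  simp [insE_symm_apply]

lemma insE_none_last {n : ℕ} (e : Equiv.Perm (Fin n)) :
    (insE n).symm (none, e) (Fin.last n) = Fin.last n := by
  simp [insE_symm_apply]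

lemma insE_some_last {n : ℕ} (e : Equiv.Perm (Fin n)) (a : Fin n) :
    (insE n).symm (some a, e) (Fin.last n) = Fin.castSucc a := by
  simp [insE_symm_apply]

lemma insE_some_pos {n : ℕ} (e : Equiv.Perm (Fin n)) (a : Fin n) :
    (insE n).symm (some a, e) (Fin.castSucc (e.symm a)) = Fin.last n := by
  simp [insE_symm_apply]

lemma insE_some_other {n : ℕ} (e : Equiv.Perm (Fin n)) (a : Fin n) (q : Fin n)
    (hq : q ≠ e.symm a) :
    (insE n).symm (some a, e) (Fin.castSucc q) = Fin.castSucc (e q) := by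
  have h1 : (some (e q) : Option (Fin n)) ≠ none := by simp
  have h2 : (some (e q) : Option (Fin n)) ≠ some a := by
    simp only [ne_eq, Option.some.injEq]
    intro h; exact hq (by simp [← h])
  simp [insE_symm_apply, Equiv.swap_apply_of_ne_of_ne h1 h2]

lemma exc_eq_sum {n : ℕ} (w : Equiv.Perm (Fin n)) :
    exc w = ∑ i : Fin n, if (i : ℕ) < (w i : ℕ) then 1 else 0 := by
  rw [exc, Finset.card_filter]

lemma wexc_eq_sum {n : ℕ} (w : Equiv.Perm (Fin n)) :
    wexc w = ∑ i : Fin n, if (i : ℕ) ≤ (w i : ℕ) then 1 else 0 := by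
  rw [wexc, Finset.card_filter]

lemma exc_insE_none {n : ℕ} (e : Equiv.Perm (Fin n)) :
    exc ((insE n).symm (none, e)) = exc e := by
  rw [exc_eq_sum, exc_eq_sum, Fin.sum_univ_castSucc]
  simp [insE_none_castSucc, insE_none_last]

lemma wexc_insE_none {n : ℕ} (e : Equiv.Perm (Fin n)) :
    wexc ((insE n).symm (none, e)) = wexc e + 1 := by
  rw [wexc_eq_sum, wexc_eq_sum, Fin.sum_univ_castSucc]
  simp [insE_none_castSucc, insE_none_last]

lemma exc_insE_some {n : ℕ} (e : Equiv.Perm (Fin n)) (a : Fin n) :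
    exc ((insE n).symm (some a, e))
      = if ((e.symm a : Fin n) : ℕ) < (a : ℕ) then exc e else exc e + 1 := by
  set p := e.symm a with hp
  have hea : e p = a := by simp [hp]
  have hmem : p ∈ (Finset.univ : Finset (Fin n)) := Finset.mem_univ p
  have key : ∀ q ∈ Finset.univ.erase p,
      (if ((Fin.castSucc q : Fin (n+1)) : ℕ) < (((insE n).symm (some a, e)) (Fin.castSucc q) : ℕ)
        then 1 else 0)
      = if (q : ℕ) < (e q : ℕ) then 1 else 0 := by
    intro q hq
    rw [insE_some_other e a q (Finset.mem_erase.1 hq).1]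
    simp
  rw [exc_eq_sum, exc_eq_sum, Fin.sum_univ_castSucc,
    ← Finset.sum_erase_add _ _ hmem, ← Finset.sum_erase_add _ _ hmem,
    Finset.sum_congr rfl key]
  rw [insE_some_pos, insE_some_last, hea]
  simp only [Fin.coe_castSucc, Fin.val_last]
  have := p.isLt; have := a.isLt
  split_ifs <;> omega

lemma wexc_insE_some {n : ℕ} (e : Equiv.Perm (Fin n)) (a : Fin n) :
    wexc ((insE n).symm (some a, e))
      = if ((e.symm a : Fin n) : ℕ) ≤ (a : ℕ) then wexc e else wexc e + 1 := by
  set p := e.symm a with hp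
  have hea : e p = a := by simp [hp]
  have hmem : p ∈ (Finset.univ : Finset (Fin n)) := Finset.mem_univ p
  have key : ∀ q ∈ Finset.univ.erase p,
      (if ((Fin.castSucc q : Fin (n+1)) : ℕ) ≤ (((insE n).symm (some a, e)) (Fin.castSucc q) : ℕ)
        then 1 else 0)
      = if (q : ℕ) ≤ (e q : ℕ) then 1 else 0 := by
    intro q hq
    rw [insE_some_other e a q (Finset.mem_erase.1 hq).1]
    simp
  rw [wexc_eq_sum, wexc_eq_sum, Fin.sum_univ_castSucc,
    ← Finset.sum_erase_add _ _ hmem, ← Finset.sum_erase_add _ _ hmem,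
    Finset.sum_congr rfl key]
  rw [insE_some_pos, insE_some_last, hea]
  simp only [Fin.coe_castSucc, Fin.val_last]
  have := p.isLt; have := a.isLt
  split_ifs <;> omega

lemma poly_step_aux (m c n : ℕ) (h : m + c = n) :
    (X : Polynomial ℝ)^m + ((m : Polynomial ℝ) * X^m + (c : Polynomial ℝ) * X^(m+1))
      = X*(1-X)*Polynomial.derivative (X^m) + (1 + (n : Polynomial ℝ)*X)*X^m := by
  subst h
  cases m with
  | zero => simp
  | succ m' =>
    rw [Polynomial.derivative_X_pow]
    simp only [Nat.add_sub_cancel, Polynomial.C_eq_natCast]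
    push_cast
    ring

lemma exc_sum_option {n : ℕ} (e : Equiv.Perm (Fin n)) :
    ∑ i : Option (Fin n), (X : Polynomial ℝ) ^ exc ((insE n).symm (i, e))
      = X*(1-X)*Polynomial.derivative (X^(exc e)) + (1 + (n : Polynomial ℝ)*X)*X^(exc e) := by
  rw [Fintype.sum_option, exc_insE_none]
  have step1 : ∀ a : Fin n, (X : Polynomial ℝ) ^ exc ((insE n).symm (some a, e))
      = if ((e.symm a : Fin n) : ℕ) < (a : ℕ) then X^(exc e) else X^(exc e + 1) := by
    intro a; rw [exc_insE_some]; split_ifs <;> rfl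
  rw [Finset.sum_congr rfl (fun a _ => step1 a), ← Equiv.sum_comp e]
  simp only [Equiv.symm_apply_apply]
  rw [Finset.sum_ite, Finset.sum_const, Finset.sum_const]
  have hcard : (Finset.univ.filter fun p : Fin n => (p:ℕ) < (e p : ℕ)).card = exc e := rfl
  have hsplit := Finset.card_filter_add_card_filter_not
    (s := (Finset.univ : Finset (Fin n))) (p := fun p : Fin n => (p:ℕ) < (e p : ℕ))
  rw [hcard] at hsplit
  rw [hcard]
  rw [← poly_step_aux (exc e) ((Finset.univ.filter fun p : Fin n => ¬ (p:ℕ) < (e p : ℕ)).card) n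
    (by simpa using hsplit)]
  simp [nsmul_eq_mul]

lemma poly_step_aux2 (m c n : ℕ) (h : m + c = n) :
    (X : Polynomial ℝ)^(m+1) + ((m : Polynomial ℝ) * X^m + (c : Polynomial ℝ) * X^(m+1))
      = X*(1-X)*Polynomial.derivative (X^m) + (((n : Polynomial ℝ)+1)*X)*X^m := by
  subst h
  cases m with
  | zero => simp; ring
  | succ m' =>
    rw [Polynomial.derivative_X_pow]
    simp only [Nat.add_sub_cancel, Polynomial.C_eq_natCast]
    push_cast
    ring

lemma wexc_sum_option {n : ℕ} (e : Equiv.Perm (Fin n)) :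
    ∑ i : Option (Fin n), (X : Polynomial ℝ) ^ wexc ((insE n).symm (i, e))
      = X*(1-X)*Polynomial.derivative (X^(wexc e)) + (((n : Polynomial ℝ)+1)*X)*X^(wexc e) := by
  rw [Fintype.sum_option, wexc_insE_none]
  have step1 : ∀ a : Fin n, (X : Polynomial ℝ) ^ wexc ((insE n).symm (some a, e))
      = if ((e.symm a : Fin n) : ℕ) ≤ (a : ℕ) then X^(wexc e) else X^(wexc e + 1) := by
    intro a; rw [wexc_insE_some]; split_ifs <;> rfl
  rw [Finset.sum_congr rfl (fun a _ => step1 a), ← Equiv.sum_comp e]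
  simp only [Equiv.symm_apply_apply]
  rw [Finset.sum_ite, Finset.sum_const, Finset.sum_const]
  have hcard : (Finset.univ.filter fun p : Fin n => (p:ℕ) ≤ (e p : ℕ)).card = wexc e := rfl
  have hsplit := Finset.card_filter_add_card_filter_not
    (s := (Finset.univ : Finset (Fin n))) (p := fun p : Fin n => (p:ℕ) ≤ (e p : ℕ))
  rw [hcard] at hsplit
  rw [hcard]
  rw [← poly_step_aux2 (wexc e) ((Finset.univ.filter fun p : Fin n => ¬ (p:ℕ) ≤ (e p : ℕ)).card) n
    (by simpa using hsplit)]
  simp [nsmul_eq_mul]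

lemma Apoly_succ (n : ℕ) :
    Apoly (n+1) = X*(1-X)*Polynomial.derivative (Apoly n)
      + (1 + (n : Polynomial ℝ)*X) * Apoly n := by
  rw [Apoly, ← Equiv.sum_comp (insE n).symm (fun w => (X : Polynomial ℝ) ^ exc w),
    Fintype.sum_prod_type_right]
  rw [Finset.sum_congr rfl (fun e _ => exc_sum_option e)]
  rw [Finset.sum_add_distrib, ← Finset.mul_sum, ← Finset.mul_sum, Apoly, map_sum]

lemma Wpoly_succ (n : ℕ) :
    Wpoly (n+1) = X*(1-X)*Polynomial.derivative (Wpoly n)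
      + (((n : Polynomial ℝ)+1)*X) * Wpoly n := by
  rw [Wpoly, ← Equiv.sum_comp (insE n).symm (fun w => (X : Polynomial ℝ) ^ wexc w),
    Fintype.sum_prod_type_right]
  rw [Finset.sum_congr rfl (fun e _ => wexc_sum_option e)]
  rw [Finset.sum_add_distrib, ← Finset.mul_sum, ← Finset.mul_sum, Wpoly, map_sum]

lemma Wpoly_eq (n : ℕ) (hn : 1 ≤ n) : Wpoly n = X * Apoly n := by
  induction n with
  | zero => omega
  | succ m ih =>
    cases Nat.eq_or_lt_of_le hn with
    | inl h =>
      -- n = 1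
      have h1 : m = 0 := by omega
      subst h1
      rw [Wpoly_succ, Apoly_succ]
      have hA : Apoly 0 = 1 := by
        rw [Apoly]
        rw [Finset.sum_eq_single_of_mem 1 (Finset.mem_univ _) (by intro b _ hb; exact absurd (Subsingleton.elim b 1) hb)]
        simp [exc]
      have hW : Wpoly 0 = 1 := by
        rw [Wpoly]
        rw [Finset.sum_eq_single_of_mem 1 (Finset.mem_univ _) (by intro b _ hb; exact absurd (Subsingleton.elim b 1) hb)]
        simp [wexc]
      rw [hA, hW]
      simp
    | inr h =>
      have hm : 1 ≤ m := by omega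
      rw [Wpoly_succ, Apoly_succ, ih hm]
      rw [Polynomial.derivative_mul]
      simp [Polynomial.derivative_X]
      ring

section ClassSum

variable {n : ℕ} (F : Finset (Fin n))

noncomputable def toSmall (w : Equiv.Perm (Fin n)) (h : ∀ x : Fin n, x ∈ F ↔ w x ∈ F) :
    Equiv.Perm (Fin F.card) :=
  (F.orderIsoOfFin rfl).toEquiv.symm.permCongr (w.subtypePerm (fun x => (h x).symm))

lemma toSmall_val (w : Equiv.Perm (Fin n)) (h : ∀ x : Fin n, x ∈ F ↔ w x ∈ F)
    (a : Fin F.card) :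
    ((F.orderIsoOfFin rfl) (toSmall F w h a) : Fin n) = w ((F.orderIsoOfFin rfl) a : Fin n) := by
  simp [toSmall, Equiv.permCongr_apply, Equiv.Perm.subtypePerm_apply]

lemma mem_iff_of_support (w : Equiv.Perm (Fin n)) (hw : w.support = F) :
    ∀ x : Fin n, x ∈ F ↔ w x ∈ F := by
  intro x
  rw [← hw]
  exact (Equiv.Perm.apply_mem_support).symm

lemma exc_toSmall (w : Equiv.Perm (Fin n)) (hw : w.support = F) :
    exc (toSmall F w (mem_iff_of_support F w hw)) = exc w := by
  classical
  set σ := F.orderIsoOfFin rfl with hσ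
  set u := toSmall F w (mem_iff_of_support F w hw) with hu
  unfold exc
  refine Finset.card_bij' (fun a _ => (σ a : Fin n)) (fun i hi => σ.symm ⟨i, ?_⟩) ?_ ?_ ?_ ?_
  · -- i ∈ F
    have hlt : (i : ℕ) < (w i : ℕ) := (Finset.mem_filter.1 hi).2
    have : w i ≠ i := by
      intro hcontra
      rw [hcontra] at hlt
      omega
    rw [← hw, Equiv.Perm.mem_support]
    exact fun hc => this hc
  · -- forward membership
    intro a ha
    have hlt : (a : ℕ) < (u a : ℕ) := (Finset.mem_filter.1 ha).2
    have h1 : σ a < σ (u a) := σ.lt_iff_lt.2 (Fin.lt_def.2 hlt)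
    have h2 : ((σ a : Fin n) : ℕ) < ((σ (u a) : Fin n) : ℕ) := h1
    rw [toSmall_val] at h2
    exact Finset.mem_filter.2 ⟨Finset.mem_univ _, h2⟩
  · -- backward membership
    intro i hi
    have hlt : (i : ℕ) < (w i : ℕ) := (Finset.mem_filter.1 hi).2
    refine Finset.mem_filter.2 ⟨Finset.mem_univ _, ?_⟩
    set b := σ.symm ⟨i, _⟩ with hb
    have hσb : (σ b : Fin n) = i := by rw [hb]; simp
    have : ((σ b : Fin n) : ℕ) < ((σ (u b) : Fin n) : ℕ) := by
      rw [toSmall_val, hσb]; exact hlt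
    have h3 : σ b < σ (u b) := Subtype.mk_lt_mk.2 (Fin.lt_def.2 this)
    exact Fin.lt_def.1 (σ.lt_iff_lt.1 h3)
  · intro a _; simp
  · intro i _; simp

lemma toSmall_mem (w : Equiv.Perm (Fin n)) (hw : w.support = F) :
    ∀ a, toSmall F w (mem_iff_of_support F w hw) a ≠ a := by
  intro a hcontra
  have h1 : ((F.orderIsoOfFin rfl) (toSmall F w (mem_iff_of_support F w hw) a) : Fin n)
      = w ((F.orderIsoOfFin rfl) a : Fin n) := toSmall_val F w _ a
  rw [hcontra] at h1
  have hmem : ((F.orderIsoOfFin rfl) a : Fin n) ∈ w.support := by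
    rw [hw]; exact ((F.orderIsoOfFin rfl) a).2
  exact (Equiv.Perm.mem_support.1 hmem) h1.symm

lemma extendDomain_support (u : Equiv.Perm (Fin F.card)) (hu : ∀ a, u a ≠ a) :
    (u.extendDomain (F.orderIsoOfFin rfl).toEquiv).support = F := by
  classical
  set σ := F.orderIsoOfFin rfl with hσ
  ext x
  rw [Equiv.Perm.mem_support]
  constructor
  · intro hx
    by_contra hxF
    exact hx (Equiv.Perm.extendDomain_apply_not_subtype u σ.toEquiv hxF)
  · intro hxF hcontra
    rw [Equiv.Perm.extendDomain_apply_subtype u σ.toEquiv hxF] at hcontra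
    have : u (σ.toEquiv.symm ⟨x, hxF⟩) = σ.toEquiv.symm ⟨x, hxF⟩ := by
      apply σ.toEquiv.injective
      rw [Equiv.apply_symm_apply]
      exact Subtype.ext hcontra
    exact hu _ this

lemma toSmall_extendDomain (u : Equiv.Perm (Fin F.card))
    (h : ∀ x : Fin n, x ∈ F ↔ (u.extendDomain (F.orderIsoOfFin rfl).toEquiv) x ∈ F) :
    toSmall F (u.extendDomain (F.orderIsoOfFin rfl).toEquiv) h = u := by
  classical
  ext a
  have h1 : ((F.orderIsoOfFin rfl) (toSmall F _ h a) : Fin n)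
      = (u.extendDomain (F.orderIsoOfFin rfl).toEquiv) ((F.orderIsoOfFin rfl) a : Fin n) :=
    toSmall_val F _ h a
  have h2 : (u.extendDomain (F.orderIsoOfFin rfl).toEquiv)
        (((F.orderIsoOfFin rfl).toEquiv a : {x // x ∈ F}) : Fin n)
      = (((F.orderIsoOfFin rfl).toEquiv (u a) : {x // x ∈ F}) : Fin n) :=
    Equiv.Perm.extendDomain_apply_image u (F.orderIsoOfFin rfl).toEquiv a
  have h3 : ((F.orderIsoOfFin rfl) (toSmall F _ h a) : Fin n)
      = ((F.orderIsoOfFin rfl) (u a) : Fin n) := h1.trans h2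
  have h4 : toSmall F (u.extendDomain (F.orderIsoOfFin rfl).toEquiv) h a = u a :=
    (F.orderIsoOfFin rfl).toEquiv.injective (Subtype.ext h3)
  exact congrArg Fin.val h4

lemma extendDomain_toSmall (w : Equiv.Perm (Fin n)) (hw : w.support = F) :
    (toSmall F w (mem_iff_of_support F w hw)).extendDomain (F.orderIsoOfFin rfl).toEquiv = w := by
  classical
  have key : ∀ x : Fin n,
      ((toSmall F w (mem_iff_of_support F w hw)).extendDomain (F.orderIsoOfFin rfl).toEquiv) x
        = w x := by
    intro x
    by_cases hx : x ∈ F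
    · set a := (F.orderIsoOfFin rfl).toEquiv.symm ⟨x, hx⟩ with ha
      have h0 : (((F.orderIsoOfFin rfl).toEquiv a : {x // x ∈ F}) : Fin n) = x := by
        rw [ha]; simp
      have h2 : ((toSmall F w (mem_iff_of_support F w hw)).extendDomain
            (F.orderIsoOfFin rfl).toEquiv)
            (((F.orderIsoOfFin rfl).toEquiv a : {x // x ∈ F}) : Fin n)
          = (((F.orderIsoOfFin rfl).toEquiv
              (toSmall F w (mem_iff_of_support F w hw) a) : {x // x ∈ F}) : Fin n) :=
        Equiv.Perm.extendDomain_apply_image _ _ a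
      rw [h0] at h2
      rw [h2]
      have h3 := toSmall_val F w (mem_iff_of_support F w hw) a
      exact h3.trans (congrArg w h0)
    · rw [Equiv.Perm.extendDomain_apply_not_subtype _ _ hx]
      have : x ∉ w.support := by rw [hw]; exact hx
      rw [Equiv.Perm.notMem_support] at this
      exact this.symm
  exact Equiv.ext key

lemma class_sum :
    ∑ w ∈ Finset.univ.filter (fun w : Equiv.Perm (Fin n) => w.support = F),
      (X : Polynomial ℝ) ^ exc w = derangePoly F.card := by
  classical
  rw [derangePoly]
  refine Finset.sum_bij'
    (fun w hw => toSmall F w (mem_iff_of_support F w (Finset.mem_filter.1 hw).2))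
    (fun u hu => u.extendDomain (F.orderIsoOfFin rfl).toEquiv) ?_ ?_ ?_ ?_ ?_
  · intro w hw
    exact Finset.mem_filter.2 ⟨Finset.mem_univ _, toSmall_mem F w (Finset.mem_filter.1 hw).2⟩
  · intro u hu
    exact Finset.mem_filter.2 ⟨Finset.mem_univ _,
      extendDomain_support F u (Finset.mem_filter.1 hu).2⟩
  · intro w hw
    exact extendDomain_toSmall F w (Finset.mem_filter.1 hw).2
  · intro u hu
    exact toSmall_extendDomain F u _
  · intro w hw
    rw [exc_toSmall F w (Finset.mem_filter.1 hw).2]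

end ClassSum

lemma wexc_eq {n : ℕ} (w : Equiv.Perm (Fin n)) :
    wexc w = (n - w.support.card) + exc w := by
  classical
  have h1 : (Finset.univ.filter fun i : Fin n => (i:ℕ) ≤ (w i:ℕ))
      = (Finset.univ.filter fun i : Fin n => w i = i)
        ∪ (Finset.univ.filter fun i : Fin n => (i:ℕ) < (w i:ℕ)) := by
    ext i
    simp only [Finset.mem_filter, Finset.mem_union, Finset.mem_univ, true_and]
    constructor
    · intro h
      rcases Nat.eq_or_lt_of_le h with h' | h'
      · left; exact Fin.ext h'.symm
      · right; exact h'
    · rintro (h | h)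
      · rw [h]
      · exact Nat.le_of_lt h
  have hdisj : Disjoint (Finset.univ.filter fun i : Fin n => w i = i)
      (Finset.univ.filter fun i : Fin n => (i:ℕ) < (w i:ℕ)) := by
    rw [Finset.disjoint_left]
    intro i h1' h2'
    have e1 : w i = i := (Finset.mem_filter.1 h1').2
    have e2 : (i:ℕ) < (w i:ℕ) := (Finset.mem_filter.1 h2').2
    rw [e1] at e2
    omega
  rw [wexc, h1, Finset.card_union_of_disjoint hdisj]
  congr 1
  have hs := Finset.card_filter_add_card_filter_not
    (s := (Finset.univ : Finset (Fin n))) (p := fun i : Fin n => w i = i)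
  have hsupp : (Finset.univ.filter fun i : Fin n => ¬ w i = i) = w.support := by
    ext i; simp [Equiv.Perm.mem_support]
  rw [hsupp] at hs
  have hcu : (Finset.univ : Finset (Fin n)).card = n := by simp
  omega

lemma sum_by_card {M : Type*} [AddCommMonoid M] (n : ℕ) (t : ℕ → M) :
    ∑ F : Finset (Fin n), t F.card
      = ∑ k ∈ Finset.range (n+1), (n.choose k) • t k := by
  classical
  rw [← Finset.sum_fiberwise_of_maps_to
    (g := fun F : Finset (Fin n) => F.card) (t := Finset.range (n+1))
    (fun F _ => Finset.mem_range.2 (Nat.lt_succ_of_le (by simpa using Finset.card_le_univ F)))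
    (fun F => t F.card)]
  refine Finset.sum_congr rfl fun k _ => ?_
  rw [Finset.sum_congr rfl (fun F hF => by rw [(Finset.mem_filter.1 hF).2]),
    Finset.sum_const]
  congr 1
  have : (Finset.univ.filter fun F : Finset (Fin n) => F.card = k)
      = Finset.powersetCard k (Finset.univ : Finset (Fin n)) := by
    rw [Finset.powersetCard_eq_filter, Finset.powerset_univ]
  rw [this, Finset.card_powersetCard]
  simp

lemma Apoly_eq_sum (n : ℕ) :
    Apoly n = ∑ k ∈ Finset.range (n+1), (n.choose k : Polynomial ℝ) * derangePoly k := by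
  classical
  rw [Apoly, ← Finset.sum_fiberwise_of_maps_to
    (g := fun w : Equiv.Perm (Fin n) => w.support) (t := Finset.univ)
    (fun w _ => Finset.mem_univ _) (fun w => (X : Polynomial ℝ) ^ exc w)]
  have step : ∀ F : Finset (Fin n),
      ∑ w ∈ Finset.univ.filter (fun w : Equiv.Perm (Fin n) => w.support = F),
        (X : Polynomial ℝ) ^ exc w = derangePoly F.card := fun F => class_sum F
  rw [Finset.sum_congr rfl (fun F _ => step F), sum_by_card n (fun k => derangePoly k)]
  refine Finset.sum_congr rfl fun k _ => ?_
  rw [nsmul_eq_mul]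

lemma Wpoly_eq_sum (n : ℕ) :
    Wpoly n = ∑ k ∈ Finset.range (n+1),
      (n.choose k : Polynomial ℝ) * (X^(n-k) * derangePoly k) := by
  classical
  rw [Wpoly, ← Finset.sum_fiberwise_of_maps_to
    (g := fun w : Equiv.Perm (Fin n) => w.support) (t := Finset.univ)
    (fun w _ => Finset.mem_univ _) (fun w => (X : Polynomial ℝ) ^ wexc w)]
  have step : ∀ F : Finset (Fin n),
      ∑ w ∈ Finset.univ.filter (fun w : Equiv.Perm (Fin n) => w.support = F),
        (X : Polynomial ℝ) ^ wexc w = X^(n - F.card) * derangePoly F.card := by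
    intro F
    rw [← class_sum F, Finset.mul_sum]
    refine Finset.sum_congr rfl fun w hw => ?_
    have hsupp : w.support = F := (Finset.mem_filter.1 hw).2
    rw [wexc_eq w, hsupp, pow_add]
  rw [Finset.sum_congr rfl (fun F _ => step F),
    sum_by_card n (fun k => (X : Polynomial ℝ)^(n-k) * derangePoly k)]
  refine Finset.sum_congr rfl fun k _ => ?_
  rw [nsmul_eq_mul]

lemma geom_split (m : ℕ) (hm : 1 ≤ m) :
    (X : Polynomial ℝ)^m - X = (X - 1) * ∑ j ∈ Finset.Icc 1 (m-1), X^j := by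
  have h0 : Finset.Icc 1 (m-1) = Finset.Ico 1 m := by
    rw [← Finset.Ico_add_one_right_eq_Icc]
    congr 1
    omega
  have h1 : ∑ j ∈ Finset.Icc 1 (m-1), (X : Polynomial ℝ)^j
      = X * ∑ j ∈ Finset.range (m-1), X^j := by
    rw [h0, Finset.sum_Ico_eq_sum_range, Finset.mul_sum]
    refine Finset.sum_congr (by congr 1) fun j _ => ?_
    rw [pow_add, pow_one]
  rw [h1, ← mul_assoc, mul_comm (X - 1) (X : Polynomial ℝ), mul_assoc,
    mul_comm (X - 1), geom_sum_mul]
  have : m - 1 + 1 = m := by omega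
  rw [mul_sub, ← pow_succ', this, mul_one]

/-- the recurrence
`d_n(x) = ∑_{k=0}^{n-2} C(n,k) d_k(x) (x + x² + ⋯ + x^{n-1-k})` for `n ≥ 2`. -/
theorem derangePoly_recurrence (n : ℕ) (hn : 2 ≤ n) :
    derangePoly n = ∑ k ∈ Finset.range (n - 1),
      Polynomial.C ((n.choose k : ℝ)) * derangePoly k *
        ∑ j ∈ Finset.Icc 1 (n - 1 - k), Polynomial.X ^ j := by
  classical
  have hn1 : 1 ≤ n := by omega
  have key : ∑ k ∈ Finset.range (n+1),
        (n.choose k : Polynomial ℝ) * (X^(n-k) * derangePoly k)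
      = ∑ k ∈ Finset.range (n+1),
        (n.choose k : Polynomial ℝ) * (X * derangePoly k) := by
    rw [← Wpoly_eq_sum, Wpoly_eq n hn1, Apoly_eq_sum, Finset.mul_sum]
    refine Finset.sum_congr rfl fun k _ => ?_
    ring
  have key2 : ∑ k ∈ Finset.range (n+1),
      (n.choose k : Polynomial ℝ) * ((X^(n-k) - X) * derangePoly k) = 0 := by
    have := sub_eq_zero_of_eq key
    rw [← Finset.sum_sub_distrib] at this
    rw [← this]
    refine Finset.sum_congr rfl fun k _ => ?_
    ring
  rw [Finset.sum_range_succ] at key2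
  have hlast : (n.choose n : Polynomial ℝ) * ((X^(n-n) - X) * derangePoly n)
      = -((X - 1) * derangePoly n) := by
    rw [Nat.choose_self, Nat.sub_self, pow_zero]
    push_cast
    ring
  have hrest : ∀ k ∈ Finset.range n,
      (n.choose k : Polynomial ℝ) * ((X^(n-k) - X) * derangePoly k)
      = (X - 1) * ((n.choose k : Polynomial ℝ)
          * derangePoly k * ∑ j ∈ Finset.Icc 1 (n-k-1), X^j) := by
    intro k hk
    have hk' : k < n := Finset.mem_range.1 hk
    rw [geom_split (n-k) (by omega)]
    ring
  rw [Finset.sum_congr rfl hrest, hlast, ← Finset.mul_sum] at key2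
  have key3 : (X - 1 : Polynomial ℝ)
      * ((∑ k ∈ Finset.range n, (n.choose k : Polynomial ℝ)
          * derangePoly k * ∑ j ∈ Finset.Icc 1 (n-k-1), X^j) - derangePoly n) = 0 := by
    rw [mul_sub]
    rw [← key2]
    ring
  have hX1 : (X - 1 : Polynomial ℝ) ≠ 0 := by
    have := Polynomial.X_sub_C_ne_zero (R := ℝ) (1 : ℝ)
    simpa using this
  have key4 : (∑ k ∈ Finset.range n, (n.choose k : Polynomial ℝ)
      * derangePoly k * ∑ j ∈ Finset.Icc 1 (n-k-1), X^j) - derangePoly n = 0 := by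
    rcases mul_eq_zero.1 key3 with h | h
    · exact absurd h hX1
    · exact h
  have key5 : derangePoly n = ∑ k ∈ Finset.range n, (n.choose k : Polynomial ℝ)
      * derangePoly k * ∑ j ∈ Finset.Icc 1 (n-k-1), X^j := by
    exact (sub_eq_zero.1 key4).symm
  rw [key5]
  have hsplit : n = (n - 1) + 1 := by omega
  rw [hsplit, Finset.sum_range_succ, ← hsplit]
  have hzero : (n.choose (n-1) : Polynomial ℝ) * derangePoly (n-1)
      * ∑ j ∈ Finset.Icc 1 (n - (n-1) - 1), X^j = 0 := by
    have : n - (n-1) - 1 = 0 := by omega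
    rw [this]
    simp
  rw [hzero, add_zero]
  refine Finset.sum_congr rfl fun k hk => ?_
  rw [Polynomial.C_eq_natCast]
  have : n - k - 1 = n - 1 - k := by omega
  rw [this]
end

section
/- For every positive integer n, d_n(x) = \sum_{k=0}^{n} (-1)^{n-k} \binom{n}{k} A_k(x), where A_k(x) is the Eulerian polynomial (with A_0(x) = 1) and d_n(x) = \sum_{w \in D_n} x^{exc(w)} is the derangement polynomial. -/
open Polynomial Finset

/-- The Eulerian polynomial `A_n(x) = ∑_{w ∈ S_n} x^{exc(w)}` (excedance version). -/
noncomputable def eulerianExc (n : ℕ) : Polynomial ℝ :=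
  ∑ w : Equiv.Perm (Fin n), Polynomial.X ^ exc w

/-! Inclusion–exclusion over fixed points: the permutations fixing a set `S` pointwise are the
permutations of `Sᶜ`, and transporting them along the order isomorphism `Fin #Sᶜ ≃o Sᶜ` preserves
excedances (a fixed point is never an excedance), so they contribute `A_{n - #S}`. -/

open Equiv

section
variable {α β : Type*} [LinearOrder α] [LinearOrder β] [Fintype α] [Fintype β]

theorem card_filter_lt_permCongr (e : α ≃o β) (σ : Perm α) :
    #{b | b < e.toEquiv.permCongr σ b} = #{a | a < σ a} :=
  card_equiv e.symm.toEquiv fun b => by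
    rw [mem_filter_univ, mem_filter_univ, Equiv.permCongr_apply]
    exact e.symm_apply_lt.symm

theorem card_filter_lt_ofSubtype {p : α → Prop} [DecidablePred p] [Fintype (Subtype p)]
    (τ : Perm (Subtype p)) : #{a | a < Perm.ofSubtype τ a} = #{x | x < τ x} := by
  symm
  refine card_bij (fun x _ => x.val) (fun x hx => ?_) (fun _ _ _ _ => Subtype.ext) fun a ha => ?_
  · rw [mem_filter_univ] at hx ⊢
    rwa [Perm.ofSubtype_apply_coe]
  · rw [mem_filter_univ] at ha
    by_cases hp : p a
    · rw [Perm.ofSubtype_apply_of_mem τ hp] at ha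
      exact ⟨⟨a, hp⟩, (mem_filter_univ _).2 ha, rfl⟩
    · rw [Perm.ofSubtype_apply_of_not_mem τ hp] at ha
      exact absurd ha (lt_irrefl a)

end

theorem exc_eq_card_filter_lt {n : ℕ} (w : Perm (Fin n)) : exc w = #{i | i < w i} :=
  rfl

theorem exc_ofSubtype_permCongr {n : ℕ} (T : Finset (Fin n)) (σ : Perm (Fin #T)) :
    exc (Perm.ofSubtype ((T.orderIsoOfFin rfl).toEquiv.permCongr σ)) = exc σ := by
  rw [exc_eq_card_filter_lt, exc_eq_card_filter_lt, card_filter_lt_ofSubtype,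
    card_filter_lt_permCongr]

theorem sum_X_pow_exc_fixing_compl_eq_eulerianExc {n : ℕ} (T : Finset (Fin n)) :
    ∑ w ∈ univ.filter (fun w : Perm (Fin n) => ∀ i ∉ T, w i = i), (X : ℝ[X]) ^ exc w =
      eulerianExc #T := by
  calc _ = ∑ w : {w : Perm (Fin n) // ∀ i, i ∉ T → w i = i}, (X : ℝ[X]) ^ exc w.1 :=
        sum_subtype _ (by simp) _
    _ = ∑ τ : Perm T, (X : ℝ[X]) ^ exc (Perm.ofSubtype τ) :=
        (Fintype.sum_equiv (Perm.subtypeEquivSubtypePerm _) _ _ fun _ => rfl).symm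
    _ = ∑ σ : Perm (Fin #T), (X : ℝ[X]) ^ exc
          (Perm.ofSubtype ((T.orderIsoOfFin rfl).toEquiv.permCongr σ)) :=
        (Fintype.sum_equiv (T.orderIsoOfFin rfl).toEquiv.permCongr _ _ fun _ => rfl).symm
    _ = eulerianExc #T := by simp only [exc_ofSubtype_permCongr, eulerianExc]

theorem inclusion_exclusion_sum_derangements {α G : Type*} [Fintype α] [DecidableEq α]
    [AddCommGroup G] (f : Perm α → G) :
    ∑ w ∈ univ.filter (fun w : Perm α => ∀ i, w i ≠ i), f w =
      ∑ t : Finset α, (-1 : ℤ) ^ #t •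
        ∑ w ∈ univ.filter (fun w : Perm α => ∀ i ∈ t, w i = i), f w := by
  have h_inf_compl : univ.inf (fun i => ({w : Perm α | w i = i} : Finset _)ᶜ) =
      univ.filter (fun w : Perm α => ∀ i, w i ≠ i) := by
    ext w; simp [mem_inf]
  have h_inf : ∀ t : Finset α, t.inf (fun i => ({w : Perm α | w i = i} : Finset _)) =
      univ.filter (fun w : Perm α => ∀ i ∈ t, w i = i) := by
    intro t; ext w; simp [mem_inf]
  rw [← h_inf_compl, inclusion_exclusion_sum_inf_compl, powerset_univ]
  simp only [h_inf]

theorem derangePoly_inclusion_exclusion_general (n : ℕ) :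
    derangePoly n = ∑ k ∈ Finset.range (n + 1),
      (-1 : Polynomial ℝ) ^ (n - k) * Polynomial.C ((n.choose k : ℝ)) * eulerianExc k := by
  calc derangePoly n = ∑ t : Finset (Fin n), (-1 : ℤ) ^ #t •
        ∑ w ∈ univ.filter (fun w : Perm (Fin n) => ∀ i ∈ t, w i = i), (X : ℝ[X]) ^ exc w := by
        rw [derangePoly]
        -- `derangePoly` decides its filter with `Nat.decidableForallFin`, not the `Fintype` instance
        convert inclusion_exclusion_sum_derangements (α := Fin n) _
    _ = ∑ t : Finset (Fin n), (-1 : ℤ) ^ #t • eulerianExc #tᶜ := by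
        refine sum_congr rfl fun t _ => ?_
        simp only [← sum_X_pow_exc_fixing_compl_eq_eulerianExc tᶜ, mem_compl, not_not]
    _ = ∑ t : Finset (Fin n), (-1 : ℤ) ^ (n - #t) • eulerianExc #t := by
        rw [← Equiv.sum_comp (compl_involutive.toPerm _)]
        simp [card_compl]
    _ = ∑ k ∈ range (n + 1), n.choose k • ((-1 : ℤ) ^ (n - k) • eulerianExc k) := by
        rw [← powerset_univ, sum_powerset_apply_card (fun k => (-1 : ℤ) ^ (n - k) • eulerianExc k),
          card_univ, Fintype.card_fin]
    _ = _ := by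
        refine sum_congr rfl fun k _ => ?_
        rw [C_eq_natCast, nsmul_eq_mul, zsmul_eq_mul]
        push_cast
        ring

/-- `d_n(x) = ∑_{k=0}^{n} (-1)^{n-k} C(n,k) A_k(x)`. -/
theorem derangePoly_inclusion_exclusion (n : ℕ) (hn : 1 ≤ n) :
    derangePoly n = ∑ k ∈ Finset.range (n + 1),
      (-1 : Polynomial ℝ) ^ (n - k) * Polynomial.C ((n.choose k : ℝ)) * eulerianExc k :=
  derangePoly_inclusion_exclusion_general n
end

section
/- The derangement polynomial d_n(x) is symmetric with center n/2: writing d_n(x) = \sum_i c_i x^i, we have c_i = c_{n-i} for all 0 \le i \le n. -/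
open Polynomial Finset

/-!
Inversion `w ↦ w⁻¹` is an involution on derangements. The excedances of `w⁻¹` correspond
(via `w`) to the positions where `w i < i`, so for a derangement, which has no fixed points,
`exc w + exc w⁻¹ = n`. Hence `d_n` equals its reflection `x^n d_n(1/x)`.
-/

theorem Polynomial.reflect_sum {R ι : Type*} [Semiring R] (N : ℕ) (s : Finset ι)
    (f : ι → R[X]) : reflect N (∑ i ∈ s, f i) = ∑ i ∈ s, reflect N (f i) := by
  ext k
  simp only [coeff_reflect, finsetSum_coeff]

theorem exc_inv {n : ℕ} (w : Equiv.Perm (Fin n)) :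
    exc w⁻¹ = #{i : Fin n | (w i : ℕ) < i} := by
  refine card_nbij' ⇑w⁻¹ ⇑w (fun i hi => by simpa using hi) (fun i hi => by simpa using hi)
    (fun i _ => by simp) (fun i _ => by simp)

theorem exc_add_exc_inv {n : ℕ} {w : Equiv.Perm (Fin n)} (hw : ∀ i, w i ≠ i) :
    exc w + exc w⁻¹ = n := by
  have hlt : #{i : Fin n | (w i : ℕ) < i} = #{i : Fin n | ¬ (i : ℕ) < w i} :=
    congrArg card <| filter_congr fun i _ => by
      have : (w i : ℕ) ≠ i := fun h => hw i (Fin.ext h)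
      omega
  rw [exc_inv, hlt, exc, card_filter_add_card_filter_not, card_univ, Fintype.card_fin]

theorem Equiv.Perm.inv_derangement_iff {α : Type*} {w : Equiv.Perm α} :
    (∀ i, w⁻¹ i ≠ i) ↔ ∀ i, w i ≠ i :=
  forall_congr' fun _ => not_congr (Equiv.Perm.inv_eq_iff_eq.trans eq_comm)

theorem reflect_derangePoly (n : ℕ) : reflect n (derangePoly n) = derangePoly n := by
  rw [derangePoly, reflect_sum]
  refine sum_equiv (Equiv.inv _) (fun w => ?_) (fun w hw => ?_)
  · simpa using Equiv.Perm.inv_derangement_iff.symm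
  · have := exc_add_exc_inv (mem_filter.mp hw).2
    rw [reflect_monomial, revAt_le (by omega)]
    congr 1
    simp only [Equiv.inv_apply]
    omega

/-- the derangement polynomial is symmetric with center `n/2`. -/
theorem derangePoly_symmetric (n i : ℕ) (h : i ≤ n) :
    (derangePoly n).coeff i = (derangePoly n).coeff (n - i) := by
  conv_lhs => rw [← reflect_derangePoly]
  rw [coeff_reflect, revAt_le h]
end

section
/- The binomial Eulerian polynomial \tilde{A}_n(x) := 1 + x \sum_{k=1}^{n} \binom{n}{k} A_k(x) satisfies \tilde{A}_n(x) = \sum_{k=0}^{n} \binom{n}{k} d_k(x) (1+x)^{n-k}, where d_k(x) is the derangement polynomial (with d_0(x)=1). -/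
open Polynomial Finset

/-- The binomial Eulerian polynomial `Ã_n(x) = 1 + x ∑_{k=1}^n C(n,k) A_k(x)`. -/
noncomputable def binEulerian (n : ℕ) : Polynomial ℝ :=
  1 + Polynomial.X * ∑ k ∈ Finset.Icc 1 n, Polynomial.C ((n.choose k : ℝ)) * eulerianExc k

def fixc {n : ℕ} (w : Equiv.Perm (Fin n)) : ℕ :=
  (Finset.univ.filter fun i : Fin n => w i = i).card

open Equiv Equiv.Perm in
lemma decomp_apply_succ {n : ℕ} (σ : Equiv.Perm (Fin n)) (q : Fin n) (i : Fin n) :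
    Equiv.Perm.decomposeFin.symm ((σ q).succ, σ) i.succ
      = if i = q then 0 else (σ i).succ := by
  rw [Equiv.Perm.decomposeFin_symm_apply_succ]
  by_cases h : i = q
  · simp [h, Equiv.swap_apply_right]
  · have h2 : (σ i).succ ≠ (σ q).succ := by
      simp only [ne_eq, Fin.succ_inj]
      exact fun hh => h (σ.injective hh)
    rw [Equiv.swap_apply_of_ne_of_ne (Fin.succ_ne_zero _) h2, if_neg h]

lemma exc_step {n : ℕ} (σ : Equiv.Perm (Fin n)) (q : Fin n) :
    exc (Equiv.Perm.decomposeFin.symm ((σ q).succ, σ))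
      + (if (q : ℕ) < (σ q : ℕ) then 1 else 0) = exc σ + 1 := by
  classical
  set w := Equiv.Perm.decomposeFin.symm ((σ q).succ, σ) with hw
  have h0 : w 0 = (σ q).succ := Equiv.Perm.decomposeFin_symm_apply_zero _ _
  have hexc : exc w = ∑ j : Fin (n+1), if (j : ℕ) < (w j : ℕ) then 1 else 0 :=
    Finset.card_filter _ _
  have hterm : ∀ i : Fin n,
      (if ((i.succ : Fin (n+1)) : ℕ) < (w i.succ : ℕ) then 1 else 0)
        = if i = q then 0 else (if (i : ℕ) < (σ i : ℕ) then 1 else 0) := by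
    intro i
    rw [hw, decomp_apply_succ]
    by_cases h : i = q
    · simp [h]
    · rw [if_neg h, if_neg h, Fin.val_succ, Fin.val_succ]
      simp [Nat.succ_lt_succ_iff]
  have hsum : ∑ i : Fin n, (if i = q then 0 else (if (i : ℕ) < (σ i : ℕ) then 1 else 0))
      = ∑ i ∈ Finset.univ.erase q, (if (i : ℕ) < (σ i : ℕ) then 1 else 0) := by
    rw [← Finset.add_sum_erase _ _ (Finset.mem_univ q), if_pos rfl, zero_add]
    exact Finset.sum_congr rfl fun i hi => if_neg (Finset.ne_of_mem_erase hi)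
  have hsig : exc σ = (if (q : ℕ) < (σ q : ℕ) then 1 else 0)
      + ∑ i ∈ Finset.univ.erase q, (if (i : ℕ) < (σ i : ℕ) then 1 else 0) := by
    rw [exc, Finset.card_filter]
    exact (Finset.add_sum_erase _ _ (Finset.mem_univ q)).symm
  have h00 : (if ((0 : Fin (n+1)) : ℕ) < (w 0 : ℕ) then 1 else 0) = 1 := by
    rw [h0]; simp [Fin.val_succ]
  rw [hexc, Fin.sum_univ_succ, h00]
  simp only [hterm]
  rw [hsum, hsig]
  omega

lemma fixc_step {n : ℕ} (σ : Equiv.Perm (Fin n)) (q : Fin n) :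
    fixc (Equiv.Perm.decomposeFin.symm ((σ q).succ, σ))
      + (if σ q = q then 1 else 0) = fixc σ := by
  classical
  set w := Equiv.Perm.decomposeFin.symm ((σ q).succ, σ) with hw
  have h0 : w 0 = (σ q).succ := Equiv.Perm.decomposeFin_symm_apply_zero _ _
  have hfix : fixc w = ∑ j : Fin (n+1), if w j = j then 1 else 0 :=
    Finset.card_filter _ _
  have hterm : ∀ i : Fin n,
      (if w i.succ = i.succ then 1 else 0)
        = if i = q then 0 else (if σ i = i then 1 else 0) := by
    intro i
    rw [hw, decomp_apply_succ]
    by_cases h : i = q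
    · simp [h, eq_comm, Fin.succ_ne_zero]
    · rw [if_neg h, if_neg h]
      simp [Fin.succ_inj]
  have hsum : ∑ i : Fin n, (if i = q then 0 else (if σ i = i then 1 else 0))
      = ∑ i ∈ Finset.univ.erase q, (if σ i = i then 1 else 0) := by
    rw [← Finset.add_sum_erase _ _ (Finset.mem_univ q), if_pos rfl, zero_add]
    exact Finset.sum_congr rfl fun i hi => if_neg (Finset.ne_of_mem_erase hi)
  have hsig : fixc σ = (if σ q = q then 1 else 0)
      + ∑ i ∈ Finset.univ.erase q, (if σ i = i then 1 else 0) := by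
    rw [fixc, Finset.card_filter]
    exact (Finset.add_sum_erase _ _ (Finset.mem_univ q)).symm
  have h00 : (if w 0 = 0 then 1 else 0) = 0 := by
    rw [h0]; simp [Fin.succ_ne_zero]
  rw [hfix, Fin.sum_univ_succ, h00]
  simp only [hterm]
  rw [hsum, hsig]
  omega

lemma exc_zero_case {n : ℕ} (σ : Equiv.Perm (Fin n)) :
    exc (Equiv.Perm.decomposeFin.symm ((0 : Fin (n+1)), σ)) = exc σ := by
  classical
  set w := Equiv.Perm.decomposeFin.symm ((0 : Fin (n+1)), σ) with hw
  have h0 : w 0 = 0 := Equiv.Perm.decomposeFin_symm_apply_zero _ _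
  have hsucc : ∀ i : Fin n, w i.succ = (σ i).succ := by
    intro i
    rw [hw, Equiv.Perm.decomposeFin_symm_apply_succ, Equiv.swap_self]
    rfl
  rw [exc, Finset.card_filter, Fin.sum_univ_succ, exc, Finset.card_filter]
  rw [h0]
  simp only [hsucc, Fin.val_succ]
  simp [Nat.succ_lt_succ_iff]

lemma fixc_zero_case {n : ℕ} (σ : Equiv.Perm (Fin n)) :
    fixc (Equiv.Perm.decomposeFin.symm ((0 : Fin (n+1)), σ)) = fixc σ + 1 := by
  classical
  set w := Equiv.Perm.decomposeFin.symm ((0 : Fin (n+1)), σ) with hw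
  have h0 : w 0 = 0 := Equiv.Perm.decomposeFin_symm_apply_zero _ _
  have hsucc : ∀ i : Fin n, w i.succ = (σ i).succ := by
    intro i
    rw [hw, Equiv.Perm.decomposeFin_symm_apply_succ, Equiv.swap_self]
    rfl
  rw [fixc, Finset.card_filter, Fin.sum_univ_succ, fixc, Finset.card_filter]
  rw [h0, if_pos rfl]
  simp only [hsucc, Fin.succ_inj]
  omega

noncomputable def Ppoly (n : ℕ) : Polynomial ℝ :=
  ∑ w : Equiv.Perm (Fin n), Polynomial.X ^ (exc w + fixc w)

/-- the common step polynomial -/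
noncomputable def Gstep (n t : ℕ) : Polynomial ℝ :=
  t • (Polynomial.X : Polynomial ℝ) ^ t + (n + 1 - t) • (Polynomial.X : Polynomial ℝ) ^ (t + 1)

lemma card_le_filter_lt {n : ℕ} (σ : Equiv.Perm (Fin n)) :
    (Finset.univ.filter fun q : Fin n => (q : ℕ) ≤ (σ q : ℕ)).card = exc σ + fixc σ := by
  classical
  have h : (Finset.univ.filter fun q : Fin n => (q : ℕ) ≤ (σ q : ℕ))
      = (Finset.univ.filter fun q : Fin n => (q : ℕ) < (σ q : ℕ))
        ∪ (Finset.univ.filter fun q : Fin n => σ q = q) := by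
    ext q
    simp only [Finset.mem_filter, Finset.mem_union, Finset.mem_univ, true_and]
    constructor
    · intro hq
      rcases Nat.lt_or_ge (q : ℕ) (σ q : ℕ) with h1 | h1
      · exact Or.inl h1
      · exact Or.inr (Fin.ext (by omega))
    · rintro (hq | hq)
      · exact Nat.le_of_lt hq
      · rw [hq]
  rw [h, Finset.card_union_of_disjoint, exc, fixc]
  rw [Finset.disjoint_filter]
  intro q _ hq hq2
  rw [hq2] at hq
  omega

lemma exc_fixc_le {n : ℕ} (σ : Equiv.Perm (Fin n)) : exc σ + fixc σ ≤ n := by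
  rw [← card_le_filter_lt]
  calc _ ≤ (Finset.univ : Finset (Fin n)).card := Finset.card_filter_le _ _
    _ = n := by simp

lemma sum_p_P {n : ℕ} (σ : Equiv.Perm (Fin n)) :
    ∑ p : Fin (n+1), (Polynomial.X : Polynomial ℝ)
        ^ (exc (Equiv.Perm.decomposeFin.symm (p, σ)) + fixc (Equiv.Perm.decomposeFin.symm (p, σ)))
      = Gstep n (exc σ + fixc σ) := by
  classical
  rw [Fin.sum_univ_succ, exc_zero_case, fixc_zero_case]
  have hre : ∑ i : Fin n, (Polynomial.X : Polynomial ℝ)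
        ^ (exc (Equiv.Perm.decomposeFin.symm (i.succ, σ)) + fixc (Equiv.Perm.decomposeFin.symm (i.succ, σ)))
      = ∑ q : Fin n, (Polynomial.X : Polynomial ℝ)
        ^ (exc (Equiv.Perm.decomposeFin.symm ((σ q).succ, σ)) + fixc (Equiv.Perm.decomposeFin.symm ((σ q).succ, σ))) :=
    (Equiv.sum_comp σ (fun i => (Polynomial.X : Polynomial ℝ)
        ^ (exc (Equiv.Perm.decomposeFin.symm (i.succ, σ)) + fixc (Equiv.Perm.decomposeFin.symm (i.succ, σ))))).symm
  rw [hre]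
  have hterm : ∀ q : Fin n,
      exc (Equiv.Perm.decomposeFin.symm ((σ q).succ, σ)) + fixc (Equiv.Perm.decomposeFin.symm ((σ q).succ, σ))
        = if (q : ℕ) ≤ (σ q : ℕ) then exc σ + fixc σ else exc σ + fixc σ + 1 := by
    intro q
    have h1 := exc_step σ q
    have h2 := fixc_step σ q
    by_cases hlt : (q : ℕ) < (σ q : ℕ)
    · rw [if_pos (Nat.le_of_lt hlt)]
      rw [if_pos hlt] at h1
      have : ¬ σ q = q := fun hc => by rw [hc] at hlt; omega
      rw [if_neg this] at h2
      omega
    · by_cases heq : σ q = q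
      · have : (q : ℕ) ≤ (σ q : ℕ) := by rw [heq]
        rw [if_pos this]
        rw [if_neg hlt] at h1
        rw [if_pos heq] at h2
        omega
      · have hne : (q : ℕ) ≠ (σ q : ℕ) := fun hc => heq (Fin.ext hc.symm)
        rw [if_neg (by omega)]
        rw [if_neg hlt] at h1
        rw [if_neg heq] at h2
        omega
  have hsplit : ∑ q : Fin n, (Polynomial.X : Polynomial ℝ)
        ^ (exc (Equiv.Perm.decomposeFin.symm ((σ q).succ, σ)) + fixc (Equiv.Perm.decomposeFin.symm ((σ q).succ, σ)))
      = ∑ q : Fin n, (if (q : ℕ) ≤ (σ q : ℕ) then (Polynomial.X : Polynomial ℝ) ^ (exc σ + fixc σ)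
          else (Polynomial.X : Polynomial ℝ) ^ (exc σ + fixc σ + 1)) := by
    refine Finset.sum_congr rfl fun q _ => ?_
    rw [hterm q]
    by_cases h : (q : ℕ) ≤ (σ q : ℕ) <;> simp [h]
  rw [hsplit, Finset.sum_ite, Finset.sum_const, Finset.sum_const, card_le_filter_lt]
  have hcard2 : (Finset.univ.filter fun q : Fin n => ¬ (q : ℕ) ≤ (σ q : ℕ)).card
      = n - (exc σ + fixc σ) := by
    have := Finset.card_filter_add_card_filter_not
      (s := (Finset.univ : Finset (Fin n))) (p := fun q : Fin n => (q : ℕ) ≤ (σ q : ℕ))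
    rw [card_le_filter_lt] at this
    simp only [Finset.card_univ, Fintype.card_fin] at this
    omega
  rw [hcard2, Gstep]
  have hle := exc_fixc_le σ
  have : n + 1 - (exc σ + fixc σ) = (n - (exc σ + fixc σ)) + 1 := by omega
  have he : exc σ + (fixc σ + 1) = exc σ + fixc σ + 1 := by omega
  rw [this, he]
  simp only [add_nsmul, one_nsmul]
  abel
lemma sum_p_A {n : ℕ} (σ : Equiv.Perm (Fin n)) :
    ∑ p : Fin (n+1), (Polynomial.X : Polynomial ℝ) ^ exc (Equiv.Perm.decomposeFin.symm (p, σ))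
      = (exc σ + 1) • (Polynomial.X : Polynomial ℝ) ^ exc σ
        + (n - exc σ) • (Polynomial.X : Polynomial ℝ) ^ (exc σ + 1) := by
  classical
  rw [Fin.sum_univ_succ, exc_zero_case]
  have hre : ∑ i : Fin n, (Polynomial.X : Polynomial ℝ) ^ exc (Equiv.Perm.decomposeFin.symm (i.succ, σ))
      = ∑ q : Fin n, (Polynomial.X : Polynomial ℝ) ^ exc (Equiv.Perm.decomposeFin.symm ((σ q).succ, σ)) :=
    (Equiv.sum_comp σ (fun i => (Polynomial.X : Polynomial ℝ) ^ exc (Equiv.Perm.decomposeFin.symm (i.succ, σ)))).symm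
  rw [hre]
  have hterm : ∀ q : Fin n,
      exc (Equiv.Perm.decomposeFin.symm ((σ q).succ, σ))
        = if (q : ℕ) < (σ q : ℕ) then exc σ else exc σ + 1 := by
    intro q
    have h1 := exc_step σ q
    by_cases hlt : (q : ℕ) < (σ q : ℕ)
    · rw [if_pos hlt]; rw [if_pos hlt] at h1; omega
    · rw [if_neg hlt]; rw [if_neg hlt] at h1; omega
  have hsplit : ∑ q : Fin n, (Polynomial.X : Polynomial ℝ) ^ exc (Equiv.Perm.decomposeFin.symm ((σ q).succ, σ))
      = ∑ q : Fin n, (if (q : ℕ) < (σ q : ℕ) then (Polynomial.X : Polynomial ℝ) ^ exc σ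
          else (Polynomial.X : Polynomial ℝ) ^ (exc σ + 1)) := by
    refine Finset.sum_congr rfl fun q _ => ?_
    rw [hterm q]
    by_cases h : (q : ℕ) < (σ q : ℕ) <;> simp [h]
  rw [hsplit, Finset.sum_ite, Finset.sum_const, Finset.sum_const]
  have hcard1 : (Finset.univ.filter fun q : Fin n => (q : ℕ) < (σ q : ℕ)).card = exc σ := rfl
  have hcard2 : (Finset.univ.filter fun q : Fin n => ¬ (q : ℕ) < (σ q : ℕ)).card = n - exc σ := by
    have := Finset.card_filter_add_card_filter_not
      (s := (Finset.univ : Finset (Fin n))) (p := fun q : Fin n => (q : ℕ) < (σ q : ℕ))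
    rw [hcard1] at this
    simp only [Finset.card_univ, Fintype.card_fin] at this
    omega
  rw [hcard1, hcard2]
  simp only [add_nsmul, one_nsmul]
  abel

lemma exc_le {n : ℕ} (σ : Equiv.Perm (Fin n)) : exc σ ≤ n := by
  calc exc σ ≤ (Finset.univ : Finset (Fin n)).card := Finset.card_filter_le _ _
    _ = n := by simp

lemma count_transfer {α : Type*} [Fintype α] [DecidableEq α] (N : ℕ) (s t : α → ℕ)
    (hs : ∀ a, s a ≤ N) (ht : ∀ a, t a ≤ N)
    (h : ∑ a : α, (Polynomial.X : Polynomial ℝ) ^ s a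
        = ∑ a : α, (Polynomial.X : Polynomial ℝ) ^ t a) (G : ℕ → Polynomial ℝ) :
    ∑ a : α, G (s a) = ∑ a : α, G (t a) := by
  classical
  have hcard : ∀ v : ℕ, (Finset.univ.filter fun a => s a = v).card
      = (Finset.univ.filter fun a => t a = v).card := by
    intro v
    have hc := congrArg (fun p : Polynomial ℝ => p.coeff v) h
    simp only [Polynomial.finset_sum_coeff, Polynomial.coeff_X_pow] at hc
    have h1 : (∑ a : α, if v = s a then (1:ℝ) else 0)
        = ((Finset.univ.filter fun a => s a = v).card : ℝ) := by
      rw [Finset.sum_boole]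
      norm_num
      apply congrArg
      apply Finset.filter_congr
      intro a _
      exact eq_comm
    have h2 : (∑ a : α, if v = t a then (1:ℝ) else 0)
        = ((Finset.univ.filter fun a => t a = v).card : ℝ) := by
      rw [Finset.sum_boole]
      norm_num
      apply congrArg
      apply Finset.filter_congr
      intro a _
      exact eq_comm
    rw [h1, h2] at hc
    exact_mod_cast hc
  have key : ∀ u : α → ℕ, (∀ a, u a ≤ N) →
      ∑ a : α, G (u a) = ∑ v ∈ Finset.range (N+1),
        (Finset.univ.filter fun a => u a = v).card • G v := by
    intro u hu
    rw [← Finset.sum_fiberwise_of_maps_to (g := u) (t := Finset.range (N+1))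
      (fun a _ => Finset.mem_range.2 (Nat.lt_succ_of_le (hu a)))]
    refine Finset.sum_congr rfl fun v _ => ?_
    rw [← Finset.sum_const]
    refine Finset.sum_congr rfl fun a ha => ?_
    rw [(Finset.mem_filter.1 ha).2]
  rw [key s hs, key t ht]
  exact Finset.sum_congr rfl fun v _ => by rw [hcard v]

lemma Ppoly_eq (n : ℕ) (hn : 1 ≤ n) : Ppoly n = Polynomial.X * eulerianExc n := by
  induction n, hn using Nat.le_induction with
  | base =>
    have hu : (Finset.univ : Finset (Equiv.Perm (Fin 1))) = {1} := by
      apply Finset.eq_singleton_iff_unique_mem.2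
      exact ⟨Finset.mem_univ _, fun w _ => Subsingleton.elim w 1⟩
    rw [Ppoly, eulerianExc, hu, Finset.sum_singleton, Finset.sum_singleton]
    have h1 : exc (1 : Equiv.Perm (Fin 1)) = 0 := by
      rw [exc]
      simp
    have h2 : fixc (1 : Equiv.Perm (Fin 1)) = 1 := by
      rw [fixc]
      simp
    rw [h1, h2]
    simp
  | succ n hn ih =>
    -- rewrite both sides as sums over (p, σ)
    have hP : Ppoly (n+1) = ∑ σ : Equiv.Perm (Fin n), Gstep n (exc σ + fixc σ) := by
      rw [Ppoly, ← Equiv.sum_comp (Equiv.Perm.decomposeFin (n := n)).symm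
        (fun w => (Polynomial.X : Polynomial ℝ) ^ (exc w + fixc w)), Fintype.sum_prod_type]
      rw [Finset.sum_comm]
      exact Finset.sum_congr rfl fun σ _ => sum_p_P σ
    have hA : Polynomial.X * eulerianExc (n+1) = ∑ σ : Equiv.Perm (Fin n), Gstep n (exc σ + 1) := by
      rw [eulerianExc, ← Equiv.sum_comp (Equiv.Perm.decomposeFin (n := n)).symm
        (fun w => (Polynomial.X : Polynomial ℝ) ^ exc w), Fintype.sum_prod_type]
      rw [Finset.sum_comm, Finset.mul_sum]
      refine Finset.sum_congr rfl fun σ _ => ?_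
      rw [sum_p_A σ, Gstep]
      have h1 : n + 1 - (exc σ + 1) = n - exc σ := by omega
      rw [h1, mul_add, mul_smul_comm, mul_smul_comm, ← pow_succ', ← pow_succ']
    rw [hP, hA]
    have hIH : ∑ σ : Equiv.Perm (Fin n), (Polynomial.X : Polynomial ℝ) ^ (exc σ + fixc σ)
        = ∑ σ : Equiv.Perm (Fin n), (Polynomial.X : Polynomial ℝ) ^ (exc σ + 1) := by
      have := ih
      rw [Ppoly, eulerianExc, Finset.mul_sum] at this
      rw [this]
      refine Finset.sum_congr rfl fun σ _ => ?_
      rw [← pow_succ']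
    exact count_transfer (n+1) _ _ (fun σ => by have := exc_fixc_le σ; omega)
      (fun σ => by have := exc_le σ; omega) hIH _

section fiber
variable {n : ℕ}

lemma mem_moved_iff {w : Equiv.Perm (Fin n)} {S : Finset (Fin n)}
    (hw : Finset.univ.filter (fun i => w i ≠ i) = S) (x : Fin n) :
    x ∈ S ↔ w x ≠ x := by
  rw [← hw]; simp

lemma moved_inv {w : Equiv.Perm (Fin n)} {S : Finset (Fin n)}
    (hw : Finset.univ.filter (fun i => w i ≠ i) = S) :
    ∀ x : Fin n, x ∈ S ↔ w x ∈ S := by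
  intro x
  rw [mem_moved_iff hw, mem_moved_iff hw]
  constructor
  · intro hx hc
    exact hx (w.injective hc)
  · intro hx hc
    rw [hc] at hx
    exact hx hc

lemma fiber_sum (S : Finset (Fin n)) :
    ∑ w ∈ Finset.univ.filter (fun w : Equiv.Perm (Fin n) =>
        Finset.univ.filter (fun i => w i ≠ i) = S), (Polynomial.X : Polynomial ℝ) ^ exc w
      = derangePoly S.card := by
  classical
  set k := S.card with hk
  let e : Fin k ≃ {x : Fin n // x ∈ S} := (S.orderIsoOfFin hk.symm).toEquiv
  have hmono : ∀ a b : Fin k, ((e a : Fin n) : ℕ) < ((e b : Fin n) : ℕ) ↔ (a : ℕ) < (b : ℕ) := by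
    intro a b
    have h1 : e a < e b ↔ a < b := (S.orderIsoOfFin hk.symm).lt_iff_lt
    rw [Fin.val_fin_lt, Fin.val_fin_lt, Subtype.coe_lt_coe]
    exact h1
  rw [derangePoly]
  refine Finset.sum_bij' (i := fun w hw => ?_) (j := fun u hu => ?_) ?_ ?_ ?_ ?_ ?_
  -- i : fiber → derangements : restrict
  · exact (e.symm.permCongr (w.subtypePerm (fun x => (moved_inv (Finset.mem_filter.1 hw).2 x).symm)))
  -- j : derangements → fiber : extend
  · exact u.extendDomain e
  -- i lands in derangements
  · intro w hw
    rw [Finset.mem_filter]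
    refine ⟨Finset.mem_univ _, fun a => ?_⟩
    have hS := (Finset.mem_filter.1 hw).2
    intro hc
    have := congrArg (fun z => (e z : Fin n)) hc
    simp only [Equiv.permCongr_apply, Equiv.symm_symm, Equiv.apply_symm_apply] at this
    have h2 : w (e a) = (e a : Fin n) := by
      simpa [Equiv.Perm.subtypePerm_apply] using this
    exact ((mem_moved_iff hS (e a)).1 (e a).2) h2
  -- j lands in fiber
  · intro u hu
    rw [Finset.mem_filter]
    refine ⟨Finset.mem_univ _, ?_⟩
    ext i
    simp only [Finset.mem_filter, Finset.mem_univ, true_and]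
    by_cases hi : i ∈ S
    · rw [Equiv.Perm.extendDomain_apply_subtype u e hi]
      constructor
      · intro _; exact hi
      · intro _
        intro hc
        have hu2 := (Finset.mem_filter.1 hu).2
        have : u (e.symm ⟨i, hi⟩) = e.symm ⟨i, hi⟩ := by
          apply e.injective
          apply Subtype.ext
          rw [Equiv.apply_symm_apply]
          exact hc
        exact hu2 _ this
    · rw [Equiv.Perm.extendDomain_apply_not_subtype u e hi]
      simp [hi]
  -- left inverse : extend (restrict w) = w
  · intro w hw
    have hS := (Finset.mem_filter.1 hw).2
    apply Equiv.ext
    intro i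
    by_cases hi : i ∈ S
    · rw [Equiv.Perm.extendDomain_apply_subtype _ e hi]
      simp [Equiv.permCongr_apply, Equiv.Perm.subtypePerm_apply]
    · rw [Equiv.Perm.extendDomain_apply_not_subtype _ e hi]
      have := (mem_moved_iff hS i)
      by_contra hc
      exact hi (this.2 (fun h2 => hc h2.symm))
  -- right inverse : restrict (extend u) = u
  · intro u hu
    apply Equiv.ext
    intro a
    have hv : (u.extendDomain e) ((e a : {x : Fin n // x ∈ S}) : Fin n)
        = ((e (u a) : {x : Fin n // x ∈ S}) : Fin n) :=
      Equiv.Perm.extendDomain_apply_image u e a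
    simp only [Equiv.permCongr_apply, Equiv.symm_symm, Equiv.Perm.subtypePerm_apply, hv,
      Subtype.coe_eta, Equiv.symm_apply_apply]
  -- values match : exc w = exc (restrict w)
  · intro w hw
    have hS := (Finset.mem_filter.1 hw).2
    congr 1
    rw [exc, exc]
    refine Finset.card_bij' (i := fun i hi => ?_) (j := fun a ha => ?_) ?_ ?_ ?_ ?_
    -- i : excedance of w → excedance of restriction
    · have hiS : i ∈ S := by
        rw [mem_moved_iff hS]
        intro hc
        rw [Finset.mem_filter] at hi
        rw [hc] at hi
        omega
      exact e.symm ⟨i, hiS⟩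
    -- j : excedance of restriction → excedance of w
    · exact (e a : Fin n)
    · intro i hi
      simp only [Finset.mem_filter, Finset.mem_univ, true_and] at hi ⊢
      rw [Equiv.permCongr_apply, Equiv.symm_symm, Equiv.apply_symm_apply]
      rw [← hmono]
      rw [Equiv.apply_symm_apply]
      simpa [Equiv.Perm.subtypePerm_apply] using hi
    · intro a ha
      simp only [Finset.mem_filter, Finset.mem_univ, true_and] at ha ⊢
      rw [Equiv.permCongr_apply, Equiv.symm_symm] at ha
      rw [← hmono] at ha
      rw [Equiv.apply_symm_apply] at ha
      simpa [Equiv.Perm.subtypePerm_apply] using ha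
    · intro i hi
      simp [Subtype.coe_eta]
    · intro a ha
      simp [Subtype.coe_eta]
end fiber

lemma Ppoly_expand (n : ℕ) :
    Ppoly n = ∑ k ∈ Finset.range (n+1),
      Polynomial.C ((n.choose k : ℝ)) * derangePoly k * Polynomial.X ^ (n - k) := by
  classical
  rw [Ppoly]
  rw [← Finset.sum_fiberwise_of_maps_to
    (g := fun w : Equiv.Perm (Fin n) => Finset.univ.filter (fun i => w i ≠ i))
    (t := (Finset.univ : Finset (Fin n)).powerset)
    (fun w _ => Finset.mem_powerset.2 (Finset.subset_univ _))]
  have hfib : ∀ S ∈ (Finset.univ : Finset (Fin n)).powerset,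
      (∑ w ∈ Finset.univ.filter (fun w : Equiv.Perm (Fin n) =>
          Finset.univ.filter (fun i => w i ≠ i) = S),
        (Polynomial.X : Polynomial ℝ) ^ (exc w + fixc w))
      = derangePoly S.card * Polynomial.X ^ (n - S.card) := by
    intro S _
    have h1 : ∀ w ∈ Finset.univ.filter (fun w : Equiv.Perm (Fin n) =>
        Finset.univ.filter (fun i => w i ≠ i) = S), fixc w = n - S.card := by
      intro w hw
      have hS := (Finset.mem_filter.1 hw).2
      have := Finset.card_filter_add_card_filter_not
        (s := (Finset.univ : Finset (Fin n))) (p := fun i => w i ≠ i)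
      rw [hS] at this
      simp only [Finset.card_univ, Fintype.card_fin] at this
      have h2 : (Finset.univ.filter fun i : Fin n => ¬ w i ≠ i) =
          (Finset.univ.filter fun i : Fin n => w i = i) := by
        apply Finset.filter_congr
        intro i _
        simp
      rw [h2] at this
      rw [fixc]
      omega
    calc (∑ w ∈ Finset.univ.filter (fun w : Equiv.Perm (Fin n) =>
          Finset.univ.filter (fun i => w i ≠ i) = S),
        (Polynomial.X : Polynomial ℝ) ^ (exc w + fixc w))
        = ∑ w ∈ Finset.univ.filter (fun w : Equiv.Perm (Fin n) =>
          Finset.univ.filter (fun i => w i ≠ i) = S),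
        (Polynomial.X : Polynomial ℝ) ^ exc w * Polynomial.X ^ (n - S.card) := by
          refine Finset.sum_congr rfl fun w hw => ?_
          rw [← pow_add, h1 w hw]
      _ = (∑ w ∈ Finset.univ.filter (fun w : Equiv.Perm (Fin n) =>
          Finset.univ.filter (fun i => w i ≠ i) = S),
        (Polynomial.X : Polynomial ℝ) ^ exc w) * Polynomial.X ^ (n - S.card) :=
          (Finset.sum_mul _ _ _).symm
      _ = derangePoly S.card * Polynomial.X ^ (n - S.card) := by rw [fiber_sum]
  rw [Finset.sum_congr rfl hfib]
  rw [Finset.sum_powerset_apply_card (fun m => derangePoly m * Polynomial.X ^ (n - m))]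
  simp only [Finset.card_univ, Fintype.card_fin]
  refine Finset.sum_congr rfl fun k _ => ?_
  rw [nsmul_eq_mul, ← mul_assoc, Polynomial.C_eq_natCast]

lemma one_add_X_pow (m : ℕ) :
    ((1 : Polynomial ℝ) + Polynomial.X) ^ m
      = ∑ j ∈ Finset.range (m+1), Polynomial.C ((m.choose j : ℝ)) * Polynomial.X ^ j := by
  rw [add_pow]
  rw [← Finset.sum_range_reflect]
  refine Finset.sum_congr rfl fun j hj => ?_
  rw [Finset.mem_range] at hj
  have hj' : j ≤ m := by omega
  have h1 : m + 1 - 1 - j = m - j := by omega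
  rw [h1, one_pow, Nat.sub_sub_self hj', Nat.choose_symm hj', Polynomial.C_eq_natCast]
  ring

lemma key_swap (n : ℕ) (g : ℕ → Polynomial ℝ) :
    ∑ k ∈ Finset.range (n+1), Polynomial.C ((n.choose k : ℝ)) * g k
        * ((1 : Polynomial ℝ) + Polynomial.X) ^ (n - k)
      = ∑ m ∈ Finset.range (n+1), Polynomial.C ((n.choose m : ℝ))
          * ∑ k ∈ Finset.range (m+1),
              Polynomial.C ((m.choose k : ℝ)) * g k * Polynomial.X ^ (m - k) := by
  classical
  have hL : ∑ k ∈ Finset.range (n+1), Polynomial.C ((n.choose k : ℝ)) * g k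
        * ((1 : Polynomial ℝ) + Polynomial.X) ^ (n - k)
      = ∑ k ∈ Finset.range (n+1), ∑ j ∈ Finset.range (n - k + 1),
          Polynomial.C ((n.choose k : ℝ)) * Polynomial.C (((n - k).choose j : ℝ))
            * g k * Polynomial.X ^ j := by
    refine Finset.sum_congr rfl fun k _ => ?_
    rw [one_add_X_pow, Finset.mul_sum]
    exact Finset.sum_congr rfl fun j _ => by ring
  have hR : ∑ m ∈ Finset.range (n+1), Polynomial.C ((n.choose m : ℝ))
          * ∑ k ∈ Finset.range (m+1),
              Polynomial.C ((m.choose k : ℝ)) * g k * Polynomial.X ^ (m - k)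
      = ∑ m ∈ Finset.range (n+1), ∑ k ∈ Finset.range (m+1),
          Polynomial.C ((n.choose m : ℝ)) * Polynomial.C ((m.choose k : ℝ))
            * g k * Polynomial.X ^ (m - k) := by
    refine Finset.sum_congr rfl fun m _ => ?_
    rw [Finset.mul_sum]
    exact Finset.sum_congr rfl fun k _ => by ring
  rw [hL, hR]
  have hswap : ∑ m ∈ Finset.range (n+1), ∑ k ∈ Finset.range (m+1),
        Polynomial.C ((n.choose m : ℝ)) * Polynomial.C ((m.choose k : ℝ))
          * g k * Polynomial.X ^ (m - k)
      = ∑ k ∈ Finset.range (n+1), ∑ m ∈ Finset.Icc k n,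
        Polynomial.C ((n.choose m : ℝ)) * Polynomial.C ((m.choose k : ℝ))
          * g k * Polynomial.X ^ (m - k) := by
    refine Finset.sum_comm' ?_
    intro m k
    simp only [Finset.mem_range, Finset.mem_Icc]
    omega
  rw [hswap]
  refine Finset.sum_congr rfl fun k hk => ?_
  rw [Finset.mem_range] at hk
  rw [← Finset.Ico_add_one_right_eq_Icc, Finset.sum_Ico_eq_sum_range]
  have hnk : n + 1 - k = n - k + 1 := by omega
  rw [hnk]
  refine Finset.sum_congr rfl fun j hj => ?_
  rw [Finset.mem_range] at hj
  have h1 : k + j - k = j := by omega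
  have h2 : (Polynomial.C ((n.choose (k+j) : ℝ)) * Polynomial.C (((k+j).choose k : ℝ)) : Polynomial ℝ)
      = Polynomial.C ((n.choose k : ℝ)) * Polynomial.C (((n - k).choose j : ℝ)) := by
    rw [← Polynomial.C_mul, ← Polynomial.C_mul, ← Nat.cast_mul, ← Nat.cast_mul,
      Nat.choose_mul (n := n) (k := k+j) (s := k) (by omega), h1]
  rw [h1, h2]

lemma Ppoly_zero : Ppoly 0 = 1 := by
  have hu : (Finset.univ : Finset (Equiv.Perm (Fin 0))) = {1} := by
    apply Finset.eq_singleton_iff_unique_mem.2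
    exact ⟨Finset.mem_univ _, fun w _ => Subsingleton.elim w 1⟩
  rw [Ppoly, hu, Finset.sum_singleton]
  have h1 : exc (1 : Equiv.Perm (Fin 0)) = 0 := by rw [exc]; simp
  have h2 : fixc (1 : Equiv.Perm (Fin 0)) = 0 := by rw [fixc]; simp
  rw [h1, h2]
  simp

/-- `Ã_n(x) = ∑_{k=0}^n C(n,k) d_k(x) (1+x)^{n-k}`. -/
theorem binEulerian_derangement_expansion (n : ℕ) :
    binEulerian n = ∑ k ∈ Finset.range (n + 1),
      Polynomial.C ((n.choose k : ℝ)) * derangePoly k * (1 + Polynomial.X) ^ (n - k) := by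
  rw [key_swap n derangePoly]
  rw [Finset.sum_congr rfl (fun m _ => by rw [← Ppoly_expand m])]
  have hsplit : Finset.range (n+1) = insert 0 (Finset.Icc 1 n) := by
    ext i
    simp only [Finset.mem_range, Finset.mem_insert, Finset.mem_Icc]
    omega
  rw [hsplit, Finset.sum_insert (by simp)]
  rw [Ppoly_zero, Nat.choose_zero_right]
  have hrest : ∀ m ∈ Finset.Icc 1 n,
      Polynomial.C ((n.choose m : ℝ)) * Ppoly m
        = Polynomial.X * (Polynomial.C ((n.choose m : ℝ)) * eulerianExc m) := by
    intro m hm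
    rw [Ppoly_eq m (Finset.mem_Icc.1 hm).1]
    ring
  rw [Finset.sum_congr rfl hrest, ← Finset.mul_sum, binEulerian]
  simp
end

section
/- If \Delta_e denotes the edge subdivision of a simplicial complex \Delta on an edge e \in \Delta, then h(\Delta_e, x) = h(\Delta, x) + x \cdot h(link_\Delta(e), x). Consequently, if h(\Delta, x) and h(link_\Delta(e), x) are both gamma-positive (with appropriate centers of symmetry n/2 and (n-2)/2 respectively, where n-1 = dim \Delta), then h(\Delta_e, x) is gamma-positive. -/
open Polynomial Finset

/-- The number of faces with `i` vertices (i.e. of dimension `i-1`). -/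
def faceCount {V : Type*} [DecidableEq V] (Δ : Finset (Finset V)) (i : ℕ) : ℕ :=
  (Δ.filter fun F => F.card = i).card

/-- The `h`-polynomial of an `(n-1)`-dimensional simplicial complex. -/
noncomputable def hPoly {V : Type*} [DecidableEq V] (n : ℕ) (Δ : Finset (Finset V)) :
    Polynomial ℝ :=
  ∑ i ∈ Finset.range (n + 1),
    Polynomial.C ((faceCount Δ i : ℝ)) * Polynomial.X ^ i * (1 - Polynomial.X) ^ (n - i)

/-- The link of a face `e` in `Δ`: faces disjoint from `e` whose union with `e` is a
face. -/
def linkC {N : ℕ} (Δ : Finset (Finset (Fin N))) (e : Finset (Fin N)) :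
    Finset (Finset (Fin N)) :=
  Finset.univ.filter fun L => L ∩ e = ∅ ∧ L ∪ e ∈ Δ

/-- Restriction of a set of vertices of `Fin (N+1)` to the old vertices `Fin N`
(the new vertex of the subdivision being `Fin.last N`). -/
def oldPart {N : ℕ} (G : Finset (Fin (N + 1))) : Finset (Fin N) :=
  Finset.univ.filter fun i : Fin N => i.castSucc ∈ G

/-- The edge subdivision (stellar subdivision on the edge `e`) of `Δ`, with new
vertex `Fin.last N`: its faces are the faces of `Δ` not containing `e`, together
with the sets `{u} ∪ A ∪ L` with `A ⊊ e` and `L` in the link of `e`. -/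
def edgeSub {N : ℕ} (Δ : Finset (Finset (Fin N))) (e : Finset (Fin N)) :
    Finset (Finset (Fin (N + 1))) :=
  Finset.univ.filter fun G : Finset (Fin (N + 1)) =>
    (Fin.last N ∉ G ∧ oldPart G ∈ Δ ∧ ¬ e ⊆ oldPart G) ∨
    (Fin.last N ∈ G ∧ ¬ e ⊆ oldPart G ∧ oldPart G ∪ e ∈ Δ)

/-! Faces of `Δ` not containing `e` stay faces of `Δ_e`, and the faces through the new vertex
are `{u} ∪ L ∪ A` with `L` in the link of `e` and `A ⊊ e`. Weighting a face `F` by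
`w |F| = x^|F| (1-x)^(n-|F|)`, each link face `L` thus trades the weight `w (|L|+2)` of `L ∪ e`
for `w (|L|+1) + 2 w (|L|+2)`, a net gain of `w (|L|+1) + w (|L|+2) = x · x^|L| (1-x)^(n-2-|L|)`.
Gamma-positivity survives because `x · x^i (1+x)^(n-2-2i) = x^(i+1) (1+x)^(n-2(i+1))`. -/

section OldPart
variable {N : ℕ}

lemma mem_oldPart {G : Finset (Fin (N + 1))} {i : Fin N} : i ∈ oldPart G ↔ i.castSucc ∈ G := by
  simp [oldPart]

lemma last_notMem_map_castSuccEmb (F : Finset (Fin N)) : Fin.last N ∉ F.map Fin.castSuccEmb := by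
  simp [Fin.castSucc_ne_last]

lemma oldPart_map_castSuccEmb (F : Finset (Fin N)) : oldPart (F.map Fin.castSuccEmb) = F := by
  ext i; simp [mem_oldPart]

lemma oldPart_insert_last (G : Finset (Fin (N + 1))) :
    oldPart (insert (Fin.last N) G) = oldPart G := by
  ext i; simp [mem_oldPart, Fin.castSucc_ne_last]

lemma map_castSuccEmb_oldPart {G : Finset (Fin (N + 1))} (h : Fin.last N ∉ G) :
    (oldPart G).map Fin.castSuccEmb = G := by
  ext a
  induction a using Fin.lastCases with
  | last => simp [h]
  | cast i => simp [mem_oldPart]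

lemma insert_last_map_castSuccEmb_oldPart {G : Finset (Fin (N + 1))} (h : Fin.last N ∈ G) :
    insert (Fin.last N) ((oldPart G).map Fin.castSuccEmb) = G := by
  ext a
  induction a using Fin.lastCases with
  | last => simp [h]
  | cast i => simp [mem_oldPart, Fin.castSucc_ne_last]

lemma card_insert_last_map_castSuccEmb (H : Finset (Fin N)) :
    (insert (Fin.last N) (H.map Fin.castSuccEmb)).card = H.card + 1 := by
  rw [card_insert_of_notMem (last_notMem_map_castSuccEmb H), card_map]

end OldPart

section Sums
variable {N : ℕ} {M : Type*} [AddCommMonoid M] {Δ : Finset (Finset (Fin N))} {e : Finset (Fin N)}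

lemma sum_edgeSub (φ : ℕ → M) :
    ∑ G ∈ edgeSub Δ e, φ G.card =
      ∑ F ∈ Δ with ¬ e ⊆ F, φ F.card + ∑ H with ¬ e ⊆ H ∧ H ∪ e ∈ Δ, φ (H.card + 1) := by
  rw [← sum_filter_not_add_sum_filter _ (Fin.last N ∈ ·)]
  congr 1
  · refine sum_nbij' oldPart (·.map Fin.castSuccEmb) ?_ ?_ ?_ ?_ ?_
    · intro G hG
      simp only [edgeSub, mem_filter, mem_univ, true_and] at hG ⊢
      tauto
    · intro F hF
      simp only [edgeSub, mem_filter, mem_univ, true_and, oldPart_map_castSuccEmb] at hF ⊢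
      exact ⟨Or.inl ⟨last_notMem_map_castSuccEmb F, hF⟩, last_notMem_map_castSuccEmb F⟩
    · intro G hG
      exact map_castSuccEmb_oldPart (mem_filter.1 hG).2
    · intro F _
      exact oldPart_map_castSuccEmb F
    · intro G hG
      rw [← map_castSuccEmb_oldPart (mem_filter.1 hG).2, card_map, oldPart_map_castSuccEmb]
  · refine sum_nbij' oldPart (fun H => insert (Fin.last N) (H.map Fin.castSuccEmb))
      ?_ ?_ ?_ ?_ ?_
    · intro G hG
      simp only [edgeSub, mem_filter, mem_univ, true_and] at hG ⊢
      tauto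
    · intro H hH
      simp only [edgeSub, mem_filter, mem_univ, true_and, oldPart_insert_last,
        oldPart_map_castSuccEmb, mem_insert_self] at hH ⊢
      tauto
    · intro G hG
      exact insert_last_map_castSuccEmb_oldPart (mem_filter.1 hG).2
    · intro H _
      rw [oldPart_insert_last, oldPart_map_castSuccEmb]
    · intro G hG
      rw [← insert_last_map_castSuccEmb_oldPart (mem_filter.1 hG).2,
        card_insert_last_map_castSuccEmb, oldPart_insert_last, oldPart_map_castSuccEmb]

lemma disjoint_of_mem_linkC {L : Finset (Fin N)} (hL : L ∈ linkC Δ e) : Disjoint L e := by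
  simpa [linkC, disjoint_iff_inter_eq_empty] using (mem_filter.1 hL).2.1

lemma sum_filter_superset_eq_sum_linkC (f : Finset (Fin N) → M) :
    ∑ F ∈ Δ with e ⊆ F, f F = ∑ L ∈ linkC Δ e, f (L ∪ e) := by
  refine sum_nbij' (· \ e) (· ∪ e) ?_ ?_ ?_ ?_ ?_
  · intro F hF
    simp only [linkC, mem_filter, mem_univ, true_and] at hF ⊢
    rw [sdiff_union_of_subset hF.2]
    exact ⟨sdiff_inter_self _ _, hF.1⟩
  · intro L hL
    exact mem_filter.2 ⟨(mem_filter.1 hL).2.2, subset_union_right⟩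
  · intro F hF
    exact sdiff_union_of_subset (mem_filter.1 hF).2
  · intro L hL
    exact union_sdiff_cancel_right (disjoint_of_mem_linkC hL)
  · intro F hF
    rw [sdiff_union_of_subset (mem_filter.1 hF).2]

lemma sum_filter_not_superset_union_mem (f : Finset (Fin N) → M) :
    ∑ H with ¬ e ⊆ H ∧ H ∪ e ∈ Δ, f H = ∑ L ∈ linkC Δ e, ∑ A ∈ e.ssubsets, f (L ∪ A) := by
  rw [← sum_product']
  refine sum_nbij' (fun H => (H \ e, H ∩ e)) (fun p => p.1 ∪ p.2) ?_ ?_ ?_ ?_ ?_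
  · intro H hH
    simp only [linkC, mem_filter, mem_univ, true_and, mem_product, mem_ssubsets] at hH ⊢
    refine ⟨⟨sdiff_inter_self _ _, by rw [sdiff_union_self_eq_union]; exact hH.2⟩, ?_⟩
    exact inter_subset_right.ssubset_of_ne fun h => hH.1 (h ▸ inter_subset_left)
  · rintro ⟨L, A⟩ hLA
    obtain ⟨hL, hA⟩ := mem_product.1 hLA
    rw [mem_ssubsets] at hA
    dsimp only at hL hA ⊢
    refine mem_filter.2 ⟨mem_univ _, fun he => ?_, ?_⟩
    · exact hA.not_subset (Disjoint.left_le_of_le_sup_left he (disjoint_of_mem_linkC hL).symm)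
    · rw [union_assoc, union_eq_right.2 hA.subset]
      exact (mem_filter.1 hL).2.2
  · intro H _
    exact sdiff_union_inter H e
  · rintro ⟨L, A⟩ hLA
    obtain ⟨hL, hA⟩ := mem_product.1 hLA
    have hLe := disjoint_of_mem_linkC hL
    have hAe := (mem_ssubsets.1 hA).subset
    dsimp only at hLe hAe ⊢
    simp only [Prod.mk.injEq]
    constructor
    · rw [union_sdiff_distrib, sdiff_eq_empty_iff_subset.2 hAe, union_empty, hLe.sdiff_eq_left]
    · rw [union_inter_distrib_right, inter_eq_left.2 hAe, disjoint_iff_inter_eq_empty.1 hLe,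
        empty_union]
  · intro H _
    rw [sdiff_union_inter]

end Sums

lemma sum_ssubsets_apply_card {α M : Type*} [DecidableEq α] [AddCancelCommMonoid M] (f : ℕ → M)
    (s : Finset α) : ∑ A ∈ s.ssubsets, f A.card = ∑ m ∈ range s.card, s.card.choose m • f m := by
  have h := sum_powerset_apply_card f (x := s)
  rw [← sum_erase_add _ _ (mem_powerset_self s), sum_range_succ, Nat.choose_self, one_smul] at h
  exact add_right_cancel h

lemma sum_edgeSub_card {M : Type*} [AddCancelCommMonoid M] {N : ℕ}
    {Δ : Finset (Finset (Fin N))} {e : Finset (Fin N)} (hcard : e.card = 2) (φ : ℕ → M) :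
    ∑ G ∈ edgeSub Δ e, φ G.card =
      ∑ F ∈ Δ, φ F.card + ∑ L ∈ linkC Δ e, (φ (L.card + 1) + φ (L.card + 2)) := by
  rw [sum_edgeSub, sum_filter_not_superset_union_mem, ← sum_filter_not_add_sum_filter Δ (e ⊆ ·),
    sum_filter_superset_eq_sum_linkC, add_assoc, ← sum_add_distrib]
  congr 1
  refine sum_congr rfl fun L hL => ?_
  have hLe := disjoint_of_mem_linkC hL
  calc ∑ A ∈ e.ssubsets, φ ((L ∪ A).card + 1)
      = ∑ A ∈ e.ssubsets, φ (A.card + (L.card + 1)) := by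
        refine sum_congr rfl fun A hA => ?_
        rw [card_union_of_disjoint (hLe.mono_right (mem_ssubsets.1 hA).subset), add_comm L.card,
          add_assoc]
    _ = φ ((L ∪ e).card) + (φ (L.card + 1) + φ (L.card + 2)) := by
        rw [sum_ssubsets_apply_card (fun k => φ (k + (L.card + 1))), card_union_of_disjoint hLe,
          hcard]
        simp [sum_range_succ, two_nsmul, add_left_comm]

noncomputable def hWeight (n k : ℕ) : ℝ[X] :=
  if k ≤ n then X ^ k * (1 - X) ^ (n - k) else 0

lemma hPoly_eq_sum_hWeight {V : Type*} [DecidableEq V] (n : ℕ) (Δ : Finset (Finset V)) :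
    hPoly n Δ = ∑ F ∈ Δ, hWeight n F.card := by
  have hterm : ∀ F : Finset V, hWeight n F.card =
      ∑ i ∈ range (n + 1), if F.card = i then X ^ i * (1 - X) ^ (n - i) else 0 := by
    intro F
    simp only [sum_ite_eq, mem_range, Nat.lt_succ_iff, hWeight]
  simp only [hterm, hPoly, faceCount]
  rw [sum_comm]
  refine sum_congr rfl fun i _ => ?_
  rw [← sum_filter, sum_const, nsmul_eq_mul, ← C_eq_natCast, mul_assoc]

lemma hWeight_add_one_add_hWeight_add_two {n k : ℕ} (h : k ≤ n) :
    hWeight (n + 2) (k + 1) + hWeight (n + 2) (k + 2) = X * hWeight n k := by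
  have hsucc : n + 2 - (k + 1) = n - k + 1 := by omega
  simp only [hWeight, h, Nat.add_le_add_iff_right, if_true, hsucc, Nat.add_sub_add_right,
    show k + 1 ≤ n + 2 by omega]
  ring

lemma hPoly_edgeSub {N n : ℕ} {Δ : Finset (Finset (Fin N))} {e : Finset (Fin N)}
    (hdim : ∀ F ∈ Δ, F.card ≤ n + 2) (hcard : e.card = 2) :
    hPoly (n + 2) (edgeSub Δ e) = hPoly (n + 2) Δ + X * hPoly n (linkC Δ e) := by
  simp only [hPoly_eq_sum_hWeight, sum_edgeSub_card hcard, mul_sum]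
  congr 1
  refine sum_congr rfl fun L hL => hWeight_add_one_add_hWeight_add_two ?_
  have := hdim _ (mem_filter.1 hL).2.2
  rw [card_union_of_disjoint (disjoint_of_mem_linkC hL), hcard] at this
  omega

def IsGammaPositive (n : ℕ) (p : ℝ[X]) : Prop :=
  ∃ γ : ℕ → ℝ, (∀ i, 0 ≤ γ i) ∧
    p = ∑ i ∈ range (n / 2 + 1), C (γ i) * X ^ i * (1 + X) ^ (n - 2 * i)

namespace IsGammaPositive

lemma add {n : ℕ} {p q : ℝ[X]} (hp : IsGammaPositive n p) (hq : IsGammaPositive n q) :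
    IsGammaPositive n (p + q) := by
  obtain ⟨γ, hγ, rfl⟩ := hp
  obtain ⟨δ, hδ, rfl⟩ := hq
  refine ⟨γ + δ, fun i => add_nonneg (hγ i) (hδ i), ?_⟩
  simp only [Pi.add_apply, C_add, add_mul, sum_add_distrib]

lemma X_mul {n : ℕ} {q : ℝ[X]} (hq : IsGammaPositive n q) : IsGammaPositive (n + 2) (X * q) := by
  obtain ⟨δ, hδ, rfl⟩ := hq
  refine ⟨fun | 0 => 0 | i + 1 => δ i, fun | 0 => le_rfl | i + 1 => hδ i, ?_⟩
  rw [show (n + 2) / 2 = n / 2 + 1 by omega, mul_sum]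
  conv_rhs => rw [sum_range_succ']
  simp only [map_zero, zero_mul, add_zero]
  refine sum_congr rfl fun i _ => ?_
  rw [show n + 2 - 2 * (i + 1) = n - 2 * i by omega]
  ring

end IsGammaPositive

theorem edge_subdivision_h_polynomial_general (N n : ℕ) (Δ : Finset (Finset (Fin N)))
    (e : Finset (Fin N))
    (hdim : ∀ F ∈ Δ, F.card ≤ n)
    (hcard : e.card = 2) (hn : 2 ≤ n) :
    hPoly n (edgeSub Δ e) = hPoly n Δ + Polynomial.X * hPoly (n - 2) (linkC Δ e) ∧
    ((∃ γ : ℕ → ℝ, (∀ i, 0 ≤ γ i) ∧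
        hPoly n Δ = ∑ i ∈ Finset.range (n / 2 + 1),
          Polynomial.C (γ i) * Polynomial.X ^ i * (1 + Polynomial.X) ^ (n - 2 * i)) →
      (∃ δ : ℕ → ℝ, (∀ i, 0 ≤ δ i) ∧
        hPoly (n - 2) (linkC Δ e) = ∑ i ∈ Finset.range ((n - 2) / 2 + 1),
          Polynomial.C (δ i) * Polynomial.X ^ i * (1 + Polynomial.X) ^ (n - 2 - 2 * i)) →
      ∃ γ' : ℕ → ℝ, (∀ i, 0 ≤ γ' i) ∧
        hPoly n (edgeSub Δ e) = ∑ i ∈ Finset.range (n / 2 + 1),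
          Polynomial.C (γ' i) * Polynomial.X ^ i * (1 + Polynomial.X) ^ (n - 2 * i)) := by
  obtain ⟨m, rfl⟩ : ∃ m, n = m + 2 := ⟨n - 2, by omega⟩
  have hsub := hPoly_edgeSub hdim hcard
  simp only [Nat.add_sub_cancel]
  exact ⟨hsub, fun hΔ hL => hsub ▸ IsGammaPositive.add hΔ (IsGammaPositive.X_mul hL)⟩

/-- `h(Δ_e, x) = h(Δ, x) + x·h(link_Δ(e), x)`; consequently, if
`h(Δ, x)` and `h(link_Δ(e), x)` are gamma-positive (with centers `n/2` and
`(n-2)/2`), then so is `h(Δ_e, x)`. -/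
theorem edge_subdivision_h_polynomial (N n : ℕ) (Δ : Finset (Finset (Fin N)))
    (e : Finset (Fin N))
    (hdown : ∀ F ∈ Δ, ∀ G ⊆ F, G ∈ Δ)
    (hdim : ∀ F ∈ Δ, F.card ≤ n)
    (he : e ∈ Δ) (hcard : e.card = 2) (hn : 2 ≤ n) :
    hPoly n (edgeSub Δ e) = hPoly n Δ + Polynomial.X * hPoly (n - 2) (linkC Δ e) ∧
    ((∃ γ : ℕ → ℝ, (∀ i, 0 ≤ γ i) ∧
        hPoly n Δ = ∑ i ∈ Finset.range (n / 2 + 1),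
          Polynomial.C (γ i) * Polynomial.X ^ i * (1 + Polynomial.X) ^ (n - 2 * i)) →
      (∃ δ : ℕ → ℝ, (∀ i, 0 ≤ δ i) ∧
        hPoly (n - 2) (linkC Δ e) = ∑ i ∈ Finset.range ((n - 2) / 2 + 1),
          Polynomial.C (δ i) * Polynomial.X ^ i * (1 + Polynomial.X) ^ (n - 2 - 2 * i)) →
      ∃ γ' : ℕ → ℝ, (∀ i, 0 ≤ γ' i) ∧
        hPoly n (edgeSub Δ e) = ∑ i ∈ Finset.range (n / 2 + 1),
          Polynomial.C (γ' i) * Polynomial.X ^ i * (1 + Polynomial.X) ^ (n - 2 * i)) :=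
  edge_subdivision_h_polynomial_general N n Δ e hdim hcard hn
end

section
/- The type-A Narayana polynomial Cat(S_{n+1}, x) = \sum_{i=0}^{n} \frac{1}{i+1} \binom{n}{i} \binom{n+1}{i} x^i is gamma-positive: Cat(S_{n+1}, x) = \sum_{i=0}^{\lfloor n/2 \rfloor} \gamma_i x^i (1+x)^{n-2i} with \gamma_i = \frac{1}{i+1} \binom{n}{i, i, n-2i} (the multinomial coefficient n!/(i! i! (n-2i)!) divided by i+1). -/
/-!
Compare coefficients of `x^k`. The `i`-th gamma term contributes `γ_i · C(n-2i, k-i)`, and a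
factorial computation rewrites this as `C(n,k) · C(k,i) · C(n-k+1, i+1) / (n-k+1)`. Summing over
`i`, Vandermonde's identity gives `C(n,k) · C(n+1,k+1) / (n-k+1)`, which is the Narayana number
`C(n,k) · C(n+1,k) / (k+1)` because `C(n+1,k+1) · (k+1) = C(n+1,k) · (n+1-k)`.
-/

open Polynomial Finset

theorem Nat.sum_range_choose_mul_choose_succ (a b : ℕ) :
    ∑ i ∈ range (a + 1), a.choose i * b.choose (i + 1) = (a + b).choose (a + 1) := by
  rw [Nat.add_choose_eq, ← Finset.Nat.sum_antidiagonal_swap, Finset.Nat.sum_antidiagonal_succ]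
  simp only [Prod.swap, Nat.choose_succ_self, zero_mul, zero_add]
  rw [Finset.Nat.sum_antidiagonal_eq_sum_range_succ (fun i j => a.choose j * b.choose (i + 1))]
  refine sum_congr rfl fun i hi => ?_
  rw [Nat.choose_symm (Nat.lt_succ_iff.mp (mem_range.mp hi))]

theorem Nat.sum_range_div_two_choose_mul_choose_succ {n k : ℕ} (hk : k ≤ n) :
    ∑ i ∈ range (n / 2 + 1), k.choose i * (n - k + 1).choose (i + 1) =
      (n + 1).choose (k + 1) := by
  have hvanish :
      ∀ i ≥ min (k + 1) (n - k + 1), k.choose i * (n - k + 1).choose (i + 1) = 0 := by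
    intro i hi
    rcases min_le_iff.mp hi with hik | hik
    · rw [Nat.choose_eq_zero_of_lt hik, zero_mul]
    · rw [Nat.choose_eq_zero_of_lt (Nat.lt_succ_of_le hik), mul_zero]
  rw [eventually_constant_sum hvanish (by omega),
    ← eventually_constant_sum hvanish (min_le_left _ _), Nat.sum_range_choose_mul_choose_succ,
    show k + (n - k + 1) = n + 1 by omega]

noncomputable def narayana (n k : ℕ) : ℝ := n.choose k * (n + 1).choose k / (k + 1)

noncomputable def narayanaGamma (n i : ℕ) : ℝ :=
  n.factorial / (i.factorial * i.factorial * (n - 2 * i).factorial * (i + 1))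

theorem narayana_eq_choose_mul_choose_succ {n k : ℕ} (hk : k ≤ n) :
    narayana n k = n.choose k * (n + 1).choose (k + 1) / (n - k + 1 : ℕ) := by
  have h := Nat.choose_succ_right_eq (n + 1) k
  rw [show n + 1 - k = n - k + 1 by omega] at h
  rw [narayana, mul_div_assoc, mul_div_assoc]
  congr 1
  rw [div_eq_div_iff (by positivity) (by positivity)]
  exact_mod_cast h.symm

theorem narayanaGamma_mul_choose (i b c : ℕ) :
    narayanaGamma (2 * i + b + c) i * (b + c).choose b =
      ((2 * i + b + c).choose (i + b) : ℝ) *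
        ((i + b).choose i * (i + c + 1).choose (i + 1) : ℕ) / (i + c + 1 : ℕ) := by
  rw [narayanaGamma, Nat.cast_mul, Nat.cast_choose ℝ (Nat.le_add_right b c),
    Nat.cast_choose ℝ (show i + b ≤ 2 * i + b + c by omega),
    Nat.cast_choose ℝ (Nat.le_add_right i b),
    Nat.cast_choose ℝ (show i + 1 ≤ i + c + 1 by omega),
    show 2 * i + b + c - 2 * i = b + c by omega, show b + c - b = c by omega,
    show 2 * i + b + c - (i + b) = i + c by omega, Nat.add_sub_cancel_left,
    show i + c + 1 - (i + 1) = c by omega, Nat.factorial_succ (i + c), Nat.factorial_succ i]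
  push_cast
  field_simp

/-- For `k > n` the truncated `n - k + 1` is junk, but then `C(n,k) = 0`. -/
theorem coeff_narayanaGamma_term {n i : ℕ} (hi : 2 * i ≤ n) (k : ℕ) :
    (C (narayanaGamma n i) * X ^ i * (1 + X) ^ (n - 2 * i)).coeff k =
      (n.choose k : ℝ) * (k.choose i * (n - k + 1).choose (i + 1) : ℕ) / (n - k + 1 : ℕ) := by
  rw [mul_right_comm, coeff_mul_X_pow', coeff_C_mul, coeff_one_add_X_pow]
  split_ifs with hik
  · by_cases hkn : k + i ≤ n
    · obtain ⟨b, rfl⟩ : ∃ b, k = i + b := ⟨k - i, by omega⟩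
      obtain ⟨c, rfl⟩ : ∃ c, n = 2 * i + b + c := ⟨n - 2 * i - b, by omega⟩
      rw [show 2 * i + b + c - 2 * i = b + c by omega, Nat.add_sub_cancel_left,
        show 2 * i + b + c - (i + b) + 1 = i + c + 1 by omega]
      exact narayanaGamma_mul_choose i b c
    · rw [Nat.choose_eq_zero_of_lt (show n - 2 * i < k - i by omega)]
      rcases lt_or_ge n k with hnk | hkn'
      · simp [Nat.choose_eq_zero_of_lt hnk]
      · simp [Nat.choose_eq_zero_of_lt (show n - k + 1 < i + 1 by omega)]
  · simp [Nat.choose_eq_zero_of_lt (not_le.mp hik)]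

theorem coeff_sum_narayana (n k : ℕ) :
    (∑ i ∈ range (n + 1), C (narayana n i) * X ^ i).coeff k = narayana n k := by
  rw [finsetSum_coeff]
  simp only [coeff_C_mul_X_pow]
  rw [sum_ite_eq, ite_eq_left_iff]
  intro hk
  rw [narayana, Nat.choose_eq_zero_of_lt (by simpa using hk)]
  simp

theorem coeff_sum_narayanaGamma (n k : ℕ) :
    (∑ i ∈ range (n / 2 + 1), C (narayanaGamma n i) * X ^ i * (1 + X) ^ (n - 2 * i)).coeff k =
      narayana n k := by
  rw [finsetSum_coeff,
    sum_congr rfl fun i hi => coeff_narayanaGamma_term (by have := mem_range.mp hi; omega) k,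
    ← sum_div, ← mul_sum, ← Nat.cast_sum]
  rcases le_or_gt k n with hk | hnk
  · rw [Nat.sum_range_div_two_choose_mul_choose_succ hk, narayana_eq_choose_mul_choose_succ hk]
  · simp [narayana, Nat.choose_eq_zero_of_lt hnk]

/-- the type-A Narayana polynomial
`Cat(S_{n+1}, x) = ∑_{i=0}^n (1/(i+1)) C(n,i) C(n+1,i) x^i` is gamma-positive with
`γ_i = (1/(i+1)) · n!/(i! i! (n-2i)!)`. -/
theorem narayana_A_gamma_positive (n : ℕ) :
    ∑ i ∈ Finset.range (n + 1),
        Polynomial.C ((n.choose i : ℝ) * ((n + 1).choose i : ℝ) / ((i : ℝ) + 1)) *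
          Polynomial.X ^ i =
      ∑ i ∈ Finset.range (n / 2 + 1),
        Polynomial.C ((n.factorial : ℝ) /
            ((i.factorial : ℝ) * (i.factorial : ℝ) * ((n - 2 * i).factorial : ℝ) *
              ((i : ℝ) + 1))) *
          Polynomial.X ^ i * (1 + Polynomial.X) ^ (n - 2 * i) := by
  ext k
  exact (coeff_sum_narayana n k).trans (coeff_sum_narayanaGamma n k).symm
end

section
/- The type-B Narayana polynomial \sum_{i=0}^{n} \binom{n}{i}^2 x^i equals \sum_{i=0}^{\lfloor n/2 \rfloor} \binom{n}{i, i, n-2i} x^i (1+x)^{n-2i}, where \binom{n}{i,i,n-2i} = n!/(i!\, i!\, (n-2i)!). -/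
/-!
Compare coefficients of `x^k`. Since `n!/(i! i! (n-2i)!) = C(n,i) C(n-i,i)`, the `i`-th summand
on the right contributes `C(n,i) C(n-i,i) C(n-2i,k-i) = C(n,k) C(k,i) C(n-k,i)` (choose the `k`
positions, then `i` of them and `i` of the others), and Vandermonde's identity sums this over `i`
to `C(n,k)^2`.
-/

open Polynomial Finset

namespace Nat

theorem choose_mul_choose_sub_comm (m a b : ℕ) :
    m.choose a * (m - a).choose b = m.choose b * (m - b).choose a := by
  have ha := choose_mul (n := m) (k := a + b) (s := a) (by omega)
  have hb := choose_mul (n := m) (k := a + b) (s := b) (by omega)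
  rw [Nat.add_sub_cancel_left] at ha
  rw [Nat.add_sub_cancel] at hb
  rw [← ha, ← hb, choose_symm_add]

theorem choose_mul_choose_mul_choose_sub {n k i : ℕ} (hik : i ≤ k) :
    n.choose k * (k.choose i * (n - k).choose i) =
      n.choose i * (n - i).choose i * (n - 2 * i).choose (k - i) := by
  have hnk : n - i - (k - i) = n - k := by omega
  have hni : n - i - i = n - 2 * i := by omega
  rw [← mul_assoc, choose_mul hik, mul_assoc, ← hnk, choose_mul_choose_sub_comm, hni, mul_assoc]

theorem sum_range_choose_mul_choose (a b : ℕ) :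
    ∑ i ∈ range (b + 1), a.choose i * b.choose i = (a + b).choose a := by
  rw [choose_symm_add, add_choose_eq, Finset.Nat.sum_antidiagonal_eq_sum_range_succ_mk]
  refine sum_congr rfl fun i hi => ?_
  rw [choose_symm (mem_range_succ_iff.mp hi)]

theorem sum_range_choose_mul_choose_of_le {a b m : ℕ} (hbm : b ≤ m) :
    ∑ i ∈ range (m + 1), a.choose i * b.choose i = (a + b).choose a := by
  rw [← sum_range_choose_mul_choose]
  refine (sum_subset (range_subset_range.2 (by omega)) fun i _ hi => ?_).symm
  exact mul_eq_zero_of_right _ (choose_eq_zero_of_lt (by simpa using hi))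

theorem sum_range_half_choose_mul_choose_sub {n k : ℕ} (hkn : k ≤ n) :
    ∑ i ∈ range (n / 2 + 1), k.choose i * (n - k).choose i = n.choose k := by
  rcases le_or_gt k (n / 2) with hk | hk
  · simp_rw [mul_comm (k.choose _)]
    rw [sum_range_choose_mul_choose_of_le hk, Nat.sub_add_cancel hkn, choose_symm hkn]
  · rw [sum_range_choose_mul_choose_of_le (by omega), Nat.add_sub_cancel' hkn]

theorem cast_factorial_div_eq_choose_mul_choose {K : Type*} [Field K] [CharZero K] {n i : ℕ}
    (hi : 2 * i ≤ n) :
    (n ! : K) / (i ! * i ! * (n - 2 * i)!) = n.choose i * (n - i).choose i := by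
  have hni : n - i - i = n - 2 * i := by omega
  rw [cast_choose K (by omega : i ≤ n), cast_choose K (by omega : i ≤ n - i), hni]
  have : ((n - i)! : K) ≠ 0 := cast_ne_zero.2 (factorial_ne_zero _)
  field_simp

end Nat

theorem Polynomial.coeff_X_pow_mul_one_add_X_pow {R : Type*} [Semiring R] (i m k : ℕ) :
    ((X : R[X]) ^ i * (1 + X) ^ m).coeff k = if i ≤ k then (m.choose (k - i) : R) else 0 := by
  rw [coeff_X_pow_mul', coeff_one_add_X_pow]

/-- the type-B Narayana polynomial `∑_{i=0}^n C(n,i)² x^i` equals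
`∑_{i=0}^{⌊n/2⌋} (n!/(i! i! (n-2i)!)) x^i (1+x)^{n-2i}`. -/
theorem narayana_B_gamma_expansion (n : ℕ) :
    ∑ i ∈ Finset.range (n + 1), Polynomial.C (((n.choose i : ℝ)) ^ 2) * Polynomial.X ^ i =
      ∑ i ∈ Finset.range (n / 2 + 1),
        Polynomial.C ((n.factorial : ℝ) /
            ((i.factorial : ℝ) * (i.factorial : ℝ) * ((n - 2 * i).factorial : ℝ))) *
          Polynomial.X ^ i * (1 + Polynomial.X) ^ (n - 2 * i) := by
  ext k
  have hterm : ∀ i ∈ range (n / 2 + 1),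
      (C ((n.factorial : ℝ) / (i.factorial * i.factorial * (n - 2 * i).factorial)) * X ^ i *
          (1 + X) ^ (n - 2 * i)).coeff k =
        ((n.choose k * (k.choose i * (n - k).choose i) : ℕ) : ℝ) := by
    intro i hi
    rw [mul_assoc, coeff_C_mul, coeff_X_pow_mul_one_add_X_pow,
      Nat.cast_factorial_div_eq_choose_mul_choose (by rw [mem_range] at hi; omega)]
    split_ifs with hik
    · rw [Nat.choose_mul_choose_mul_choose_sub hik]
      push_cast
      ring
    · simp [Nat.choose_eq_zero_of_lt (not_le.1 hik)]
  rw [finsetSum_coeff, finsetSum_coeff, sum_congr rfl hterm, ← Nat.cast_sum, ← mul_sum]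
  simp only [coeff_C_mul_X_pow, sum_ite_eq, mem_range]
  rcases le_or_gt k n with hkn | hkn
  · rw [Nat.sum_range_half_choose_mul_choose_sub hkn, if_pos (by omega)]
    push_cast
    ring
  · simp [Nat.choose_eq_zero_of_lt hkn]
end
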